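/- arXiv:2204.12529 — 9 statements merged into one kernel-verified Lean document; each statement's English description precedes it below -/
import Mathlib

section
/- Let M be a pointed metric space and (f_n) a sequence in the closed unit ball of Lip_0(M). For each n let U_n = {x ∈ M : f_n(x) ≠ 0}. If the sets U_n are pairwise disjoint, then the linear operator T : c_0 → Lip_0(M) defined by T(e_n) = f_n extends to a bounded operator with ‖T‖ ≤ 2; equivalently, for every sequence (λ_n) ∈ c_0, the pointwise defined function g = Σ λ_n f_n is Lipschitz with Lipschitz constant at most 2·sup_n |λ_n|. -/
open Metric Set Filter Topology ZeroAtInfty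

/-- The Lipschitz norm (best Lipschitz constant, as a supremum of difference quotients). -/
noncomputable def lipNorm {M : Type*} [MetricSpace M] (f : M → ℝ) : ℝ :=
  sSup {r : ℝ | ∃ x y : M, x ≠ y ∧ r = |f x - f y| / dist x y}

/-- `f` strongly attains its Lipschitz norm. -/
def StronglyAttains {M : Type*} [MetricSpace M] (f : M → ℝ) : Prop :=
  ∃ x y : M, x ≠ y ∧ (f x - f y) / dist x y = lipNorm f

/-- `f` is Lipschitz with (real) constant `K`. -/
def IsLipWith {M : Type*} [MetricSpace M] (K : ℝ) (f : M → ℝ) : Prop :=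
  ∀ x y : M, |f x - f y| ≤ K * dist x y

/-- Distance between two subsets of a metric space. -/
noncomputable def setDist {M : Type*} [MetricSpace M] (A B : Set M) : ℝ :=
  sInf {r : ℝ | ∃ a ∈ A, ∃ b ∈ B, r = dist a b}

/-- A subset is uniformly discrete. -/
def UnifDiscreteOn {M : Type*} [MetricSpace M] (s : Set M) : Prop :=
  ∃ r > 0, ∀ x ∈ s, ∀ y ∈ s, x ≠ y → r ≤ dist x y

/-- `R(x)`: the supremum of radii `R ≥ 0` with `closedBall x R = {x}`. -/
noncomputable def isolRad {M : Type*} [MetricSpace M] (x : M) : ℝ :=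
  sSup {R : ℝ | 0 ≤ R ∧ Metric.closedBall x R = {x}}

/-- disjointly supported functions in the unit ball of `Lip_0(M)` sum to a
`c₀`-like family: `g = Σ λₙ fₙ` is Lipschitz with constant at most `2 sup |λₙ|`. -/
theorem stmt1 {M : Type*} [MetricSpace M] (z : M) (f : ℕ → M → ℝ)
    (hf0 : ∀ n, f n z = 0) (hf1 : ∀ n, IsLipWith 1 (f n))
    (hdisj : ∀ n m, n ≠ m → Disjoint {x | f n x ≠ 0} {x | f m x ≠ 0}) :
    ∀ l : ℕ → ℝ, Tendsto l atTop (𝓝 0) →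
      IsLipWith (2 * ⨆ n, |l n|) (fun x => ∑' n, l n * f n x) := by
  intro l hl
  have hbdd : BddAbove (Set.range fun n => |l n|) := by
    have : Tendsto (fun n => |l n|) atTop (𝓝 0) := by simpa using hl.abs
    exact this.bddAbove_range
  set S : ℝ := ⨆ n, |l n| with hS
  have hSnn : 0 ≤ S := Real.iSup_nonneg fun n => abs_nonneg _
  have hle : ∀ n, |l n| ≤ S := fun n => le_ciSup hbdd n
  -- cross vanishing
  have hcross : ∀ n m (x : M), n ≠ m → f n x ≠ 0 → f m x = 0 := by
    intro n m x hnm hn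
    by_contra hm
    exact (Set.disjoint_left.mp (hdisj n m hnm)) hn hm
  have hval : ∀ (x : M) n, f n x ≠ 0 → (∑' k, l k * f k x) = l n * f n x := by
    intro x n hn
    refine tsum_eq_single n fun m hm => ?_
    rw [hcross n m x (Ne.symm hm) hn, mul_zero]
  have hzero : ∀ x : M, (∀ n, f n x = 0) → (∑' k, l k * f k x) = 0 := by
    intro x hx
    have : (fun k => l k * f k x) = fun _ => (0:ℝ) := by
      funext k; rw [hx k, mul_zero]
    rw [this, tsum_zero]
  intro x y
  show |(∑' k, l k * f k x) - ∑' k, l k * f k y| ≤ 2 * S * dist x y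
  have hd : (0:ℝ) ≤ dist x y := dist_nonneg
  -- basic estimate: |l n * f n x| ≤ S * dist x y when f n y = 0
  have key : ∀ n, f n y = 0 → |l n * f n x| ≤ S * dist x y := by
    intro n hy
    rw [abs_mul]
    calc |l n| * |f n x| ≤ S * (1 * dist x y) := by
          refine mul_le_mul (hle n) ?_ (abs_nonneg _) hSnn
          simpa [hy] using hf1 n x y
      _ = S * dist x y := by ring
  have key' : ∀ n, f n x = 0 → |l n * f n y| ≤ S * dist x y := by
    intro n hx
    rw [abs_mul]
    calc |l n| * |f n y| ≤ S * (1 * dist x y) := by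
          refine mul_le_mul (hle n) ?_ (abs_nonneg _) hSnn
          have := hf1 n y x
          rw [dist_comm] at this
          simpa [hx] using this
      _ = S * dist x y := by ring
  by_cases hx : ∃ n, f n x ≠ 0
  · obtain ⟨n, hn⟩ := hx
    rw [hval x n hn]
    by_cases hy : ∃ m, f m y ≠ 0
    · obtain ⟨m, hm⟩ := hy
      rw [hval y m hm]
      by_cases hnm : n = m
      · subst hnm
        have : |l n * f n x - l n * f n y| = |l n| * |f n x - f n y| := by
          rw [← abs_mul]; ring_nf
        rw [this]
        calc |l n| * |f n x - f n y| ≤ S * (1 * dist x y) :=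
              mul_le_mul (hle n) (hf1 n x y) (abs_nonneg _) hSnn
          _ ≤ 2 * S * dist x y := by nlinarith
      · have h1 : f n y = 0 := hcross m n y (Ne.symm hnm) hm
        have h2 : f m x = 0 := hcross n m x hnm hn
        calc |l n * f n x - l m * f m y| ≤ |l n * f n x| + |l m * f m y| := abs_sub _ _
          _ ≤ S * dist x y + S * dist x y := add_le_add (key n h1) (key' m h2)
          _ = 2 * S * dist x y := by ring
    · push_neg at hy
      rw [hzero y hy, sub_zero]
      calc |l n * f n x| ≤ S * dist x y := key n (hy n)
        _ ≤ 2 * S * dist x y := by nlinarith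
  · push_neg at hx
    rw [hzero x hx]
    by_cases hy : ∃ m, f m y ≠ 0
    · obtain ⟨m, hm⟩ := hy
      rw [hval y m hm, zero_sub, abs_neg]
      calc |l m * f m y| ≤ S * dist x y := key' m (hx m)
        _ ≤ 2 * S * dist x y := by nlinarith
    · push_neg at hy
      rw [hzero y hy, sub_zero, abs_zero]
      positivity
end

section
/- Let M be a complete metric space that is discrete (every point is isolated) but not uniformly discrete. Then for every k ≥ 2 and every ε > 0 there exist points x, y ∈ M with 0 < d(x,y) ≤ ε such that the set M \ closedBall(x, k·d(x,y)) is not uniformly discrete. -/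
open Metric Set Filter Topology ZeroAtInfty

/-- if a complete metric space is discrete but not uniformly discrete, then
for every `k ≥ 2` and `ε > 0` there are `x, y` with `0 < d(x,y) ≤ ε` such that
`M \ closedBall(x, k·d(x,y))` is not uniformly discrete. -/
theorem stmt4 {M : Type*} [MetricSpace M] [CompleteSpace M]
    (hdisc : ∀ x : M, ∃ r > (0 : ℝ), ball x r = {x})
    (hnud : ¬ UnifDiscreteOn (Set.univ : Set M)) :
    ∀ k : ℕ, 2 ≤ k → ∀ ε > (0 : ℝ), ∃ x y : M, 0 < dist x y ∧ dist x y ≤ ε ∧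
      ¬ UnifDiscreteOn (Set.univ \ Metric.closedBall x (k * dist x y)) := by

  intro k hk ε hε
  by_contra hcon
  push_neg at hcon
  have hsmall : ∀ δ > (0:ℝ), ∃ u v : M, u ≠ v ∧ dist u v < δ := by
    intro δ hδ
    rw [UnifDiscreteOn] at hnud
    push_neg at hnud
    obtain ⟨u, -, v, -, huv, h⟩ := hnud δ hδ
    exact ⟨u, v, huv, h⟩
  have hk1 : (1:ℝ) ≤ (k:ℝ) := by exact_mod_cast Nat.one_le_of_lt hk
  have key : ∀ x y : M, 0 < dist x y → dist x y ≤ ε →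
      ∃ u v : M, 0 < dist u v ∧ dist u v ≤ dist x y / 2 ∧
        dist u x ≤ ((k:ℝ)+1) * dist x y := by
    intro x y hd hdε
    obtain ⟨r, hr, hrd⟩ := hcon x y hd hdε
    obtain ⟨u, v, huv, hdist⟩ := hsmall (min (r/2) (dist x y / 2)) (by positivity)
    have hδr : dist u v < r :=
      lt_of_lt_of_le hdist (le_trans (min_le_left _ _) (by linarith))
    have hδd : dist u v ≤ dist x y / 2 :=
      le_of_lt (lt_of_lt_of_le hdist (min_le_right _ _))
    have hball : u ∈ Metric.closedBall x (k * dist x y) ∨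
        v ∈ Metric.closedBall x (k * dist x y) := by
      by_contra h
      push_neg at h
      have := hrd u ⟨mem_univ u, h.1⟩ v ⟨mem_univ v, h.2⟩ huv
      linarith
    rcases hball with h | h
    · refine ⟨u, v, dist_pos.mpr huv, hδd, ?_⟩
      have hm := mem_closedBall.mp h
      nlinarith
    · refine ⟨u, v, dist_pos.mpr huv, hδd, ?_⟩
      have hm := mem_closedBall.mp h
      have ht := dist_triangle u v x
      nlinarith
  have keyS : ∀ p : {p : M × M // 0 < dist p.1 p.2 ∧ dist p.1 p.2 ≤ ε},
      ∃ q : {p : M × M // 0 < dist p.1 p.2 ∧ dist p.1 p.2 ≤ ε},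
        dist q.1.1 q.1.2 ≤ dist p.1.1 p.1.2 / 2 ∧
        dist q.1.1 p.1.1 ≤ ((k:ℝ)+1) * dist p.1.1 p.1.2 := by
    rintro ⟨⟨x, y⟩, hd, hdε⟩
    obtain ⟨u, v, h1, h2, h3⟩ := key x y hd hdε
    exact ⟨⟨(u, v), h1, le_trans h2 (by linarith)⟩, h2, h3⟩
  choose step hstep1 hstep2 using keyS
  obtain ⟨x0, y0, hxy0, hd0⟩ := hsmall ε hε
  set p0 : {p : M × M // 0 < dist p.1 p.2 ∧ dist p.1 p.2 ≤ ε} :=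
    ⟨(x0, y0), dist_pos.mpr hxy0, le_of_lt hd0⟩ with hp0
  set f : ℕ → {p : M × M // 0 < dist p.1 p.2 ∧ dist p.1 p.2 ≤ ε} :=
    fun n => step^[n] p0 with hfdef
  have hf : ∀ n, f (n+1) = step (f n) := fun n => Function.iterate_succ_apply' step n p0
  have hdpos : ∀ n, 0 < dist (f n).1.1 (f n).1.2 := fun n => (f n).2.1
  have hdgeo : ∀ n, dist (f n).1.1 (f n).1.2 ≤ ε * (1/2)^n := by
    intro n
    induction n with
    | zero => simpa using (f 0).2.2
    | succ n ih =>
      have h := hstep1 (f n)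
      rw [← hf n] at h
      calc dist (f (n+1)).1.1 (f (n+1)).1.2 ≤ dist (f n).1.1 (f n).1.2 / 2 := h
        _ ≤ ε * (1/2)^n / 2 := by linarith
        _ = ε * (1/2)^(n+1) := by ring
  have hx : ∀ n, dist ((f (n+1)).1.1) ((f n).1.1) ≤ ((k:ℝ)+1) * ε * (1/2)^n := by
    intro n
    have h := hstep2 (f n)
    rw [← hf n] at h
    calc dist ((f (n+1)).1.1) ((f n).1.1) ≤ ((k:ℝ)+1) * dist (f n).1.1 (f n).1.2 := h
      _ ≤ ((k:ℝ)+1) * (ε * (1/2)^n) :=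
          mul_le_mul_of_nonneg_left (hdgeo n) (by positivity)
      _ = ((k:ℝ)+1) * ε * (1/2)^n := by ring
  have hcauchy : CauchySeq (fun n => (f n).1.1) :=
    cauchySeq_of_le_geometric (1/2) (((k:ℝ)+1)*ε) (by norm_num)
      (fun n => by rw [dist_comm]; exact hx n)
  obtain ⟨z, hz⟩ := cauchySeq_tendsto_of_complete hcauchy
  obtain ⟨r, hr, hrball⟩ := hdisc z
  obtain ⟨N, hN⟩ := Metric.tendsto_atTop.mp hz (r/2) (by linarith)
  have h2 : ∃ n : ℕ, ε * (1/2)^n < r/2 := by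
    obtain ⟨n, hn⟩ := exists_pow_lt_of_lt_one (show (0:ℝ) < r/(2*ε) by positivity)
      (show (1/2:ℝ) < 1 by norm_num)
    refine ⟨n, ?_⟩
    have : ε * (1/2:ℝ)^n < ε * (r/(2*ε)) := by
      exact mul_lt_mul_of_pos_left hn hε
    calc ε * (1/2:ℝ)^n < ε * (r/(2*ε)) := this
      _ = r/2 := by field_simp
  obtain ⟨n0, hn0⟩ := h2
  set m := max N n0 with hm
  have hxm : dist ((f m).1.1) z < r/2 := hN m (le_max_left _ _)
  have hdm : dist (f m).1.1 (f m).1.2 < r/2 := by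
    have hle : (1/2:ℝ)^m ≤ (1/2)^n0 :=
      pow_le_pow_of_le_one (by norm_num) (by norm_num) (le_max_right _ _)
    have := hdgeo m
    have : ε * (1/2:ℝ)^m ≤ ε * (1/2)^n0 :=
      mul_le_mul_of_nonneg_left hle (le_of_lt hε)
    linarith [hdgeo m]
  have hym : dist ((f m).1.2) z < r := by
    have := dist_triangle (f m).1.2 (f m).1.1 z
    rw [dist_comm ((f m).1.2) ((f m).1.1)] at this
    linarith
  have hxz : (f m).1.1 = z := by
    have : (f m).1.1 ∈ Metric.ball z r := by
      rw [Metric.mem_ball]; linarith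
    rw [hrball] at this
    exact this
  have hyz : (f m).1.2 = z := by
    have : (f m).1.2 ∈ Metric.ball z r := by
      rw [Metric.mem_ball]; exact hym
    rw [hrball] at this
    exact this
  have := hdpos m
  rw [hxz, hyz, dist_self] at this
  exact lt_irrefl 0 this
end

section
/- Let M be a pointed metric space and suppose there are points x_n ∈ M and radii R_n > 0 (n ∈ ℕ) such that: (1) d(B(x_i,R_i), B(x_j,R_j)) > 0 for i ≠ j; (2) (R_i + R_j)/d(B(x_i,R_i), B(x_j,R_j)) < 1/2 for i ≠ j; (3) for each n there is y_n ∈ B(x_n,R_n) with y_n ≠ x_n and d(x_n,y_n) < d(y_n, M \ B(x_n,R_n)). Then for each n the function f_n(x) = min{d(x,x_n), d(x, M \ B(x_n,R_n))} (after discarding a ball containing the base point if necessary so that f_n vanishes at the base point) has Lipschitz norm 1 and satisfies f_n(y_n) - f_n(x_n) = d(x_n,y_n); moreover, for every (λ_n) ∈ c_0 the function g = Σ λ_n f_n is Lipschitz with ‖g‖ = sup_n |λ_n| and g strongly attains its norm. In particular SNA(M) contains a closed subspace linearly isometric to c_0. -/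
open Metric Set Filter Topology ZeroAtInfty

lemma my_setDist_le {M : Type*} [MetricSpace M] {A B : Set M} {a b : M}
    (ha : a ∈ A) (hb : b ∈ B) : setDist A B ≤ dist a b := by
  apply csInf_le
  · refine ⟨0, ?_⟩
    rintro r ⟨u, hu, v, hv, rfl⟩
    positivity
  · exact ⟨a, ha, b, hb, rfl⟩

lemma my_quot_mem_le {M : Type*} [MetricSpace M] {f : M → ℝ} {K : ℝ}
    (hlip : IsLipWith K f) {r : ℝ}
    (hr : r ∈ {r : ℝ | ∃ u v : M, u ≠ v ∧ r = |f u - f v| / dist u v}) : r ≤ K := by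
  obtain ⟨u, v, huv, rfl⟩ := hr
  rw [div_le_iff₀ (dist_pos.2 huv)]
  exact hlip u v

lemma my_le_lipNorm {M : Type*} [MetricSpace M] {f : M → ℝ} {K : ℝ}
    (hlip : IsLipWith K f) {u v : M} (huv : u ≠ v) :
    |f u - f v| / dist u v ≤ lipNorm f :=
  le_csSup ⟨K, fun _ hr => my_quot_mem_le hlip hr⟩ ⟨u, v, huv, rfl⟩

lemma my_lipNorm_le {M : Type*} [MetricSpace M] {f : M → ℝ} {K : ℝ}
    (hlip : IsLipWith K f) {u v : M} (huv : u ≠ v) : lipNorm f ≤ K :=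
  csSup_le ⟨_, ⟨u, v, huv, rfl⟩⟩ (fun _ hr => my_quot_mem_le hlip hr)

lemma my_abs_infDist_sub_le {M : Type*} [MetricSpace M] (s : Set M) (u v : M) :
    |infDist u s - infDist v s| ≤ dist u v := by
  rw [abs_sub_le_iff]
  constructor
  · linarith [infDist_le_infDist_add_dist (x := u) (y := v) (s := s)]
  · linarith [infDist_le_infDist_add_dist (x := v) (y := u) (s := s), dist_comm u v]

lemma my_exists_abs_eq_iSup {l : ℕ → ℝ} (hl : Tendsto l atTop (𝓝 0))
    (hpos : 0 < ⨆ n, |l n|) : ∃ n, |l n| = ⨆ n, |l n| := by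
  set S := ⨆ n, |l n| with hS
  have hbdd : BddAbove (range fun n => |l n|) := hl.abs.bddAbove_range
  obtain ⟨n0, hn0⟩ := exists_lt_of_lt_ciSup (half_lt_self hpos)
  have htend : ∀ᶠ n in atTop, |l n| < S / 2 := by
    have h0 : Tendsto (fun n => |l n|) atTop (𝓝 0) := by simpa using hl.abs
    exact h0.eventually_lt_const (half_pos hpos)
  obtain ⟨N, hN⟩ := eventually_atTop.1 htend
  have hn0N : n0 < N := by
    by_contra h
    exact absurd (hN n0 (le_of_not_gt h)) (not_lt.2 hn0.le)
  set F := (Finset.range N).filter (fun n => S / 2 ≤ |l n|) with hF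
  have hn0F : n0 ∈ F := by
    simp only [hF, Finset.mem_filter, Finset.mem_range]
    exact ⟨hn0N, hn0.le⟩
  obtain ⟨m, hmF, hm⟩ := F.exists_max_image (fun n => |l n|) ⟨n0, hn0F⟩
  refine ⟨m, le_antisymm (le_ciSup hbdd m) (ciSup_le fun n => ?_)⟩
  by_cases hn : n ∈ F
  · exact hm n hn
  · have hmS : S / 2 ≤ |l m| := (Finset.mem_filter.1 hmF).2
    simp only [hF, Finset.mem_filter, Finset.mem_range, not_and, not_le] at hn
    by_cases hnN : n < N
    · exact (hn hnN).le.trans hmS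
    · exact (hN n (le_of_not_gt hnN)).le.trans hmS

/-- the key technical lemma producing an isometric copy of `c₀` inside
`SNA(M)` out of a sequence of well-separated balls. -/
theorem stmt5 {M : Type*} [MetricSpace M] (z : M) (x : ℕ → M) (R : ℕ → ℝ) (y : ℕ → M)
    (hR : ∀ n, 0 < R n)
    (h1 : ∀ i j, i ≠ j → 0 < setDist (ball (x i) (R i)) (ball (x j) (R j)))
    (h2 : ∀ i j, i ≠ j →
      (R i + R j) / setDist (ball (x i) (R i)) (ball (x j) (R j)) < 1 / 2)
    (h3 : ∀ n, y n ∈ ball (x n) (R n) ∧ y n ≠ x n ∧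
      dist (x n) (y n) < infDist (y n) ((ball (x n) (R n))ᶜ))
    (hz : ∀ n, z ∉ ball (x n) (R n)) :
    ∀ f : ℕ → M → ℝ,
      (∀ n, f n = fun w => min (dist w (x n)) (infDist w ((ball (x n) (R n))ᶜ))) →
      (∀ n, f n z = 0 ∧ lipNorm (f n) = 1 ∧ f n (y n) - f n (x n) = dist (x n) (y n)
        ∧ StronglyAttains (f n)) ∧
      (∀ l : ℕ → ℝ, Tendsto l atTop (𝓝 0) →
        IsLipWith (⨆ n, |l n|) (fun w => ∑' n, l n * f n w) ∧
        lipNorm (fun w => ∑' n, l n * f n w) = ⨆ n, |l n| ∧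
        StronglyAttains (fun w => ∑' n, l n * f n w)) := by
  intro f hf
  have hfw : ∀ n w, f n w = min (dist w (x n)) (infDist w ((ball (x n) (R n))ᶜ)) :=
    fun n w => by rw [hf n]
  have hnonneg : ∀ n w, 0 ≤ f n w := fun n w => by
    rw [hfw]; exact le_min dist_nonneg infDist_nonneg
  have hzero : ∀ n w, w ∉ ball (x n) (R n) → f n w = 0 := fun n w hw => by
    have h0 : infDist w ((ball (x n) (R n))ᶜ) = 0 := infDist_zero_of_mem hw
    rw [hfw, h0, min_eq_right dist_nonneg]
  have hfx : ∀ n, f n (x n) = 0 := fun n => by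
    rw [hfw, dist_self]; exact min_eq_left infDist_nonneg
  have hfy : ∀ n, f n (y n) = dist (x n) (y n) := fun n => by
    rw [hfw, dist_comm (y n) (x n)]
    exact min_eq_left (h3 n).2.2.le
  have hlip1 : ∀ n, IsLipWith 1 (f n) := fun n u v => by
    rw [hfw, hfw, one_mul]
    refine (abs_min_sub_min_le_max _ _ _ _).trans (max_le ?_ ?_)
    · exact abs_dist_sub_le u v (x n)
    · exact my_abs_infDist_sub_le _ u v
  have hdisj : ∀ i j, i ≠ j → ∀ w, w ∈ ball (x i) (R i) → w ∉ ball (x j) (R j) := by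
    intro i j hij w hwi hwj
    have h := my_setDist_le hwi hwj
    rw [dist_self] at h
    exact absurd (h1 i j hij) (not_lt.2 h)
  have hfleR : ∀ n w, w ∈ ball (x n) (R n) → f n w ≤ R n := fun n w hw => by
    rw [hfw]
    exact (min_le_left _ _).trans (mem_ball.1 hw).le
  have hfleinf : ∀ n w, f n w ≤ infDist w ((ball (x n) (R n))ᶜ) := fun n w => by
    rw [hfw]; exact min_le_right _ _
  constructor
  · intro n
    have hyne : y n ≠ x n := (h3 n).2.1
    have hdpos : (0:ℝ) < dist (x n) (y n) := dist_pos.2 hyne.symm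
    have hval : f n (y n) - f n (x n) = dist (x n) (y n) := by rw [hfy, hfx, sub_zero]
    have hnorm : lipNorm (f n) = 1 := by
      refine le_antisymm (my_lipNorm_le (hlip1 n) hyne) ?_
      have h := my_le_lipNorm (hlip1 n) hyne
      rwa [hval, dist_comm (y n) (x n), abs_of_nonneg dist_nonneg,
        div_self hdpos.ne'] at h
    refine ⟨hzero n z (hz n), hnorm, hval, y n, x n, hyne, ?_⟩
    rw [hval, dist_comm (y n) (x n), div_self hdpos.ne', hnorm]
  · intro l hl
    set S := ⨆ n, |l n| with hSdef
    set g := fun w => ∑' n, l n * f n w with hgdef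
    have hbdd : BddAbove (range fun n => |l n|) := hl.abs.bddAbove_range
    have hlS : ∀ n, |l n| ≤ S := fun n => le_ciSup hbdd n
    have hS0 : (0:ℝ) ≤ S := (abs_nonneg _).trans (hlS 0)
    have hgball : ∀ n w, w ∈ ball (x n) (R n) → g w = l n * f n w := by
      intro n w hw
      exact tsum_eq_single n fun m hm => by
        rw [hzero m w (hdisj n m (Ne.symm hm) w hw), mul_zero]
    have hgout : ∀ w, (∀ n, w ∉ ball (x n) (R n)) → g w = 0 := by
      intro w hw
      have h0 : ∀ n, l n * f n w = 0 := fun n => by rw [hzero n w (hw n), mul_zero]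
      exact (tsum_congr h0).trans tsum_zero
    have hglip : IsLipWith S g := by
      intro u v
      by_cases hu : ∃ i, u ∈ ball (x i) (R i)
      · obtain ⟨i, hi⟩ := hu
        by_cases hv : ∃ j, v ∈ ball (x j) (R j)
        · obtain ⟨j, hj⟩ := hv
          by_cases hij : i = j
          · subst hij
            rw [hgball i u hi, hgball i v hj, ← mul_sub, abs_mul]
            calc |l i| * |f i u - f i v| ≤ S * (1 * dist u v) :=
                  mul_le_mul (hlS i) (hlip1 i u v) (abs_nonneg _) hS0
              _ = S * dist u v := by ring
          · rw [hgball i u hi, hgball j v hj]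
            have hD : setDist (ball (x i) (R i)) (ball (x j) (R j)) ≤ dist u v :=
              my_setDist_le hi hj
            have hDpos := h1 i j hij
            have h2' := h2 i j hij
            rw [div_lt_iff₀ hDpos] at h2'
            have hRR : R i + R j ≤ dist u v := by linarith
            have e1 : |l i * f i u - l j * f j v| ≤ |l i| * f i u + |l j| * f j v := by
              calc |l i * f i u - l j * f j v| ≤ |l i * f i u| + |l j * f j v| := by
                    rw [sub_eq_add_neg]
                    exact (abs_add_le _ _).trans (by rw [abs_neg])
                _ = |l i| * f i u + |l j| * f j v := by
                    rw [abs_mul, abs_mul, abs_of_nonneg (hnonneg i u),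
                      abs_of_nonneg (hnonneg j v)]
            have e2 : |l i| * f i u + |l j| * f j v ≤ S * (R i + R j) := by
              have := mul_le_mul (hlS i) (hfleR i u hi) (hnonneg i u) hS0
              have := mul_le_mul (hlS j) (hfleR j v hj) (hnonneg j v) hS0
              rw [mul_add]; linarith
            exact e1.trans (e2.trans (mul_le_mul_of_nonneg_left hRR hS0))
        · push_neg at hv
          rw [hgball i u hi, hgout v hv, sub_zero, abs_mul, abs_of_nonneg (hnonneg i u)]
          have hfd : f i u ≤ dist u v :=
            (hfleinf i u).trans (infDist_le_dist_of_mem (hv i))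
          exact mul_le_mul (hlS i) hfd (hnonneg i u) hS0
      · push_neg at hu
        by_cases hv : ∃ j, v ∈ ball (x j) (R j)
        · obtain ⟨j, hj⟩ := hv
          rw [hgout u hu, hgball j v hj, zero_sub, abs_neg, abs_mul,
            abs_of_nonneg (hnonneg j v)]
          have hfd : f j v ≤ dist u v := by
            rw [dist_comm]
            exact (hfleinf j v).trans (infDist_le_dist_of_mem (hu j))
          exact mul_le_mul (hlS j) hfd (hnonneg j v) hS0
        · push_neg at hv
          rw [hgout u hu, hgout v hv, sub_self, abs_zero]
          positivity
    have hquot : ∀ n, g (y n) - g (x n) = l n * dist (x n) (y n) := by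
      intro n
      rw [hgball n _ (h3 n).1, hgball n _ (mem_ball_self (hR n)), hfy, hfx,
        mul_zero, sub_zero]
    have hnorm : lipNorm g = S := by
      refine le_antisymm (my_lipNorm_le hglip (h3 0).2.1) (ciSup_le fun n => ?_)
      have h := my_le_lipNorm hglip (h3 n).2.1
      have hdpos : (0:ℝ) < dist (x n) (y n) := dist_pos.2 (h3 n).2.1.symm
      rwa [hquot n, dist_comm (y n) (x n), abs_mul, abs_of_nonneg dist_nonneg,
        mul_div_assoc, div_self hdpos.ne', mul_one] at h
    refine ⟨hglip, hnorm, ?_⟩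
    rcases eq_or_lt_of_le hS0 with hS | hS
    · refine ⟨y 0, x 0, (h3 0).2.1, ?_⟩
      have hl0 : l 0 = 0 := by
        have := hlS 0
        rw [← hS] at this
        exact abs_eq_zero.1 (le_antisymm this (abs_nonneg _))
      rw [hquot 0, hl0, zero_mul, zero_div, hnorm, ← hS]
    · obtain ⟨n, hn⟩ := my_exists_abs_eq_iSup hl hS
      rw [← hSdef] at hn
      have hdpos : (0:ℝ) < dist (x n) (y n) := dist_pos.2 (h3 n).2.1.symm
      rcases le_or_gt 0 (l n) with hln | hln
      · refine ⟨y n, x n, (h3 n).2.1, ?_⟩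
        rw [hnorm, hquot n, dist_comm (y n) (x n), mul_div_assoc,
          div_self hdpos.ne', mul_one, ← hn, abs_of_nonneg hln]
      · refine ⟨x n, y n, (h3 n).2.1.symm, ?_⟩
        have : g (x n) - g (y n) = -(l n) * dist (x n) (y n) := by
          have := hquot n; linarith
        rw [hnorm, this, mul_div_assoc, div_self hdpos.ne', mul_one, ← hn,
          abs_of_neg hln]
end

section
/- Let M be an infinite complete pointed metric space whose set M' of accumulation points is infinite. Then SNA(M) contains a closed linear subspace of Lip_0(M) that is linearly isometric to c_0, and every element of this subspace strongly attains its Lipschitz norm. -/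
open Metric Set Filter Topology ZeroAtInfty

/-- Core: from an infinite set, extract a sequence with well-separated small balls. -/
lemma exists_sep_core {M : Type*} [MetricSpace M] [CompleteSpace M]
    {S : Set M} (hS : S.Infinite) :
    ∃ (x : ℕ → M) (e : ℕ → ℝ), (∀ n, 0 < e n) ∧ (∀ n, x n ∈ S) ∧
      (∀ k j, k < j → 4 * (e k + e j) ≤ dist (x k) (x j)) := by
  classical
  set a := hS.natEmbedding with ha
  set b : ℕ → M := fun n => (a n : M) with hb
  have hbS : ∀ n, b n ∈ S := fun n => (a n).2
  have hbinj : Function.Injective b := fun n m h => a.injective (Subtype.ext h)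
  by_cases htb : TotallyBounded (Set.range b)
  · -- totally bounded: convergent subsequence, use geometric annuli around the limit
    have hK : IsCompact (closure (Set.range b)) :=
      TotallyBounded.isCompact_of_isClosed htb.closure isClosed_closure
    have hbmem : ∀ n, b n ∈ closure (Set.range b) := fun n =>
      subset_closure (Set.mem_range_self n)
    obtain ⟨q, -, φ, hφ, hconv⟩ := hK.tendsto_subseq hbmem
    set D : ℕ → ℝ := fun j => dist (b (φ j)) q with hD
    have key : ∀ c : ℝ, 0 < c → ∃ j, 0 < D j ∧ D j < c := by
      intro c hc
      have := (Metric.tendsto_atTop.mp hconv) c hc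
      obtain ⟨N, hN⟩ := this
      have hne : b (φ N) ≠ q ∨ b (φ (N+1)) ≠ q := by
        by_contra h
        push_neg at h
        have : φ N = φ (N + 1) := hbinj (h.1.trans h.2.symm)
        exact absurd this (hφ (Nat.lt_succ_self N)).ne
      rcases hne with h | h
      · exact ⟨N, dist_pos.2 h, hN N le_rfl⟩
      · exact ⟨N + 1, dist_pos.2 h, hN (N+1) (Nat.le_succ N)⟩
    have key2 : ∀ c : ℝ, ∃ j, 0 < D j ∧ (0 < c → D j < c) := by
      intro c
      rcases le_or_gt c 0 with hc | hc
      · obtain ⟨j, h1, _⟩ := key 1 one_pos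
        exact ⟨j, h1, fun h => absurd h hc.not_gt⟩
      · obtain ⟨j, h1, h2⟩ := key c hc
        exact ⟨j, h1, fun _ => h2⟩
    choose pick hpos hlt using key2
    set ψ : ℕ → ℕ := fun n => Nat.rec (pick 1) (fun _ j => pick (D j / 16)) n with hψ
    have hψpos : ∀ n, 0 < D (ψ n) := by
      intro n; cases n with
      | zero => exact hpos 1
      | succ k => exact hpos _
    have hψstep : ∀ n, D (ψ (n+1)) < D (ψ n) / 16 := by
      intro n
      exact hlt (D (ψ n) / 16) (div_pos (hψpos n) (by norm_num))
    have hmono : ∀ k j, k < j → D (ψ j) ≤ D (ψ k) / 16 := by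
      intro k j hkj
      induction j with
      | zero => omega
      | succ j ih =>
        rcases Nat.lt_succ_iff_lt_or_eq.mp hkj with h | h
        · have h1 := ih h
          have h2 := hψstep j
          have h3 := hψpos k
          linarith
        · subst h; exact (hψstep k).le
    refine ⟨fun n => b (φ (ψ n)), fun n => D (ψ n) / 16, fun n => div_pos (hψpos n) (by norm_num),
      fun n => hbS _, ?_⟩
    intro k j hkj
    have h1 := hmono k j hkj
    have h2 := hψpos k
    have h3 := hψpos j
    have htri : D (ψ k) ≤ dist (b (φ (ψ k))) (b (φ (ψ j))) + D (ψ j) :=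
      dist_triangle _ _ _
    linarith
  · -- not totally bounded: uniformly separated sequence
    rw [totallyBounded_iff] at htb
    push_neg at htb
    obtain ⟨ε, hε, hsep⟩ := htb
    have hpick : ∀ t : Finset M, ∃ p, p ∈ Set.range b ∧ ∀ y ∈ t, ε ≤ dist p y := by
      intro t
      obtain ⟨p, hp, hnot⟩ := Set.not_subset.mp (hsep t t.finite_toSet)
      refine ⟨p, hp, fun y hy => ?_⟩
      by_contra hlt
      push_neg at hlt
      exact hnot (Set.mem_biUnion hy (mem_ball.2 hlt))
    choose pick hpickS hpickd using hpick
    set F : ℕ → Finset M := fun n =>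
      Nat.rec ∅ (fun _ Fk => insert (pick Fk) Fk) n with hF
    set x : ℕ → M := fun n => pick (F n) with hx
    have hmem : ∀ k n, k < n → x k ∈ F n := by
      intro k n hkn
      induction n with
      | zero => omega
      | succ n ih =>
        rcases Nat.lt_succ_iff_lt_or_eq.mp hkn with h | h
        · exact Finset.mem_insert_of_mem (ih h)
        · subst h; exact Finset.mem_insert_self _ _
    refine ⟨x, fun _ => ε / 9, fun n => by positivity, ?_, ?_⟩
    · intro n
      have hx' : x n ∈ Set.range b := hpickS (F n)
      obtain ⟨m, hm⟩ := hx'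
      exact hm ▸ hbS m
    · intro k j hkj
      have := hpickd (F j) (x k) (hmem k j hkj)
      rw [dist_comm]
      linarith


lemma lipNorm_eq_of {M : Type*} [MetricSpace M] {f : M → ℝ} {K : ℝ}
    (hlip : ∀ x y, |f x - f y| ≤ K * dist x y)
    (hatt : ∃ x y : M, x ≠ y ∧ |f x - f y| = K * dist x y) :
    lipNorm f = K := by
  obtain ⟨x, y, hxy, heq⟩ := hatt
  have hd : 0 < dist x y := dist_pos.2 hxy
  have hmem : K ∈ {r : ℝ | ∃ x y : M, x ≠ y ∧ r = |f x - f y| / dist x y} := by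
    refine ⟨x, y, hxy, ?_⟩
    rw [heq, mul_div_assoc, div_self hd.ne', mul_one]
  have hub : ∀ r ∈ {r : ℝ | ∃ x y : M, x ≠ y ∧ r = |f x - f y| / dist x y}, r ≤ K := by
    rintro r ⟨u, v, huv, rfl⟩
    have hduv : 0 < dist u v := dist_pos.2 huv
    exact (div_le_iff₀ hduv).2 (by rw [mul_comm] at *; exact (hlip u v).trans_eq (mul_comm _ _) )
  exact le_antisymm (csSup_le ⟨K, hmem⟩ hub) (le_csSup ⟨K, hub⟩ hmem)

/-- if the set of accumulation points of a complete metric space is infinite,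
then `SNA(M)` contains an isometric copy of `c₀`: there is a sequence of norm-one functions
in `Lip_0(M)` such that every `c₀`-combination has Lipschitz norm `sup|λₙ|` and strongly
attains its norm. -/
theorem stmt6 {M : Type*} [MetricSpace M] [CompleteSpace M] (z : M)
    (hM' : {x : M | ∀ ε > (0 : ℝ), ∃ y : M, y ≠ x ∧ dist y x < ε}.Infinite) :
    ∃ f : ℕ → M → ℝ, (∀ n, f n z = 0 ∧ IsLipWith 1 (f n) ∧ lipNorm (f n) = 1) ∧
      ∀ l : ℕ → ℝ, Tendsto l atTop (𝓝 0) →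
        IsLipWith (⨆ n, |l n|) (fun w => ∑' n, l n * f n w) ∧
        lipNorm (fun w => ∑' n, l n * f n w) = ⨆ n, |l n| ∧
        StronglyAttains (fun w => ∑' n, l n * f n w) := by
  classical
  obtain ⟨x, e0, he0pos, hxS, hsep0⟩ :=
    exists_sep_core (hM'.diff (Set.finite_singleton z))
  have hxA : ∀ n, ∀ ε > (0:ℝ), ∃ y, y ≠ x n ∧ dist y (x n) < ε := fun n => (hxS n).1
  have hxz : ∀ n, x n ≠ z := fun n h => (hxS n).2 (Set.mem_singleton_iff.2 h)
  set e : ℕ → ℝ := fun n => min (e0 n) (dist z (x n)) with he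
  have hepos : ∀ n, 0 < e n := fun n =>
    lt_min (he0pos n) (dist_pos.2 (hxz n).symm)
  have hez : ∀ n, e n ≤ dist z (x n) := fun n => min_le_right _ _
  have hsep : ∀ n m, n ≠ m → 4 * (e n + e m) ≤ dist (x n) (x m) := by
    have key : ∀ k j, k < j → 4 * (e k + e j) ≤ dist (x k) (x j) := by
      intro k j hkj
      have h0 := hsep0 k j hkj
      have h1 : e k ≤ e0 k := min_le_left _ _
      have h2 : e j ≤ e0 j := min_le_left _ _
      linarith
    intro n m hnm
    rcases hnm.lt_or_gt with h | h
    · exact key n m h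
    · rw [dist_comm]; linarith [key m n h]
  set f : ℕ → M → ℝ := fun n w => max (e n - dist w (x n)) 0 with hf
  have hf_lip : ∀ n v w, |f n v - f n w| ≤ dist v w := by
    intro n v w
    calc |f n v - f n w| ≤ |(e n - dist v (x n)) - (e n - dist w (x n))| :=
          abs_max_sub_max_le_abs _ _ _
      _ = |dist w (x n) - dist v (x n)| := by ring_nf
      _ ≤ dist w v := abs_dist_sub_le _ _ _
      _ = dist v w := dist_comm _ _
  have hf_nonneg : ∀ n w, 0 ≤ f n w := fun n w => le_max_right _ _
  have hf_le : ∀ n w, f n w ≤ e n := fun n w =>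
    max_le (by linarith [dist_nonneg (x := w) (y := x n)]) (hepos n).le
  have hf_supp : ∀ n w, f n w ≠ 0 → dist w (x n) < e n := by
    intro n w hw
    by_contra h
    push_neg at h
    exact hw (max_eq_right (by linarith))
  have hf_self : ∀ n, f n (x n) = e n := by
    intro n
    have h1 : f n (x n) = max (e n) 0 := by simp [hf]
    rw [h1]; exact max_eq_left (hepos n).le
  have hdisj : ∀ w n m, n ≠ m → f n w ≠ 0 → f m w = 0 := by
    intro w n m hnm hn
    by_contra hm
    have h1 := hf_supp n w hn
    have h2 := hf_supp m w hm
    have h3 := hsep n m hnm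
    have h4 : dist (x n) (x m) ≤ dist w (x n) + dist w (x m) := by
      rw [dist_comm w (x n)]
      exact dist_triangle _ _ _
    have h5 := hepos n
    have h6 := hepos m
    linarith
  have hnear : ∀ n, ∃ y, y ≠ x n ∧ 0 < dist y (x n) ∧ dist y (x n) < e n := by
    intro n
    obtain ⟨y, hy1, hy2⟩ := hxA n (e n) (hepos n)
    exact ⟨y, hy1, dist_pos.2 hy1, hy2⟩
  refine ⟨f, ?_, ?_⟩
  · intro n
    refine ⟨max_eq_right (by linarith [hez n]), fun v w => by rw [one_mul]; exact hf_lip n v w, ?_⟩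
    obtain ⟨y, hy1, hy2, hy3⟩ := hnear n
    refine lipNorm_eq_of (fun v w => by rw [one_mul]; exact hf_lip n v w) ⟨x n, y, hy1.symm, ?_⟩
    have hfy : f n y = e n - dist y (x n) := max_eq_left (by linarith)
    rw [hf_self n, hfy, one_mul, dist_comm (x n) y, abs_of_nonneg (by linarith)]
    ring
  · intro l hl
    have hmax : ∃ n₀, ∀ n, |l n| ≤ |l n₀| := by
      by_cases hz0 : ∀ n, l n = 0
      · exact ⟨0, fun n => by simp [hz0]⟩
      · push_neg at hz0
        obtain ⟨m, hm⟩ := hz0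
        have habs : Tendsto (fun n => |l n|) atTop (𝓝 0) := by
          simpa using hl.abs
        have hev : ∀ᶠ n in atTop, |l n| < |l m| :=
          habs.eventually_lt_const (abs_pos.2 hm)
        obtain ⟨N, hN⟩ := eventually_atTop.mp hev
        obtain ⟨n₀, hn₀mem, hn₀⟩ := Finset.exists_max_image (Finset.range (N+1))
          (fun n => |l n|) ⟨0, Finset.mem_range.2 (Nat.succ_pos N)⟩
        refine ⟨n₀, fun n => ?_⟩
        rcases lt_or_ge n (N+1) with h | h
        · exact hn₀ n (Finset.mem_range.2 h)
        · have hmN : m < N + 1 := by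
            by_contra hc
            push_neg at hc
            exact absurd (hN m (by omega)) (lt_irrefl _)
          exact le_trans (hN n (by omega)).le (hn₀ m (Finset.mem_range.2 hmN))
    obtain ⟨n₀, hn₀⟩ := hmax
    have hbdd : BddAbove (Set.range fun n => |l n|) :=
      ⟨|l n₀|, by rintro r ⟨n, rfl⟩; exact hn₀ n⟩
    have hLeq : (⨆ n, |l n|) = |l n₀| :=
      le_antisymm (ciSup_le hn₀) (le_ciSup hbdd n₀)
    set L := ⨆ n, |l n| with hLdef
    have hL0 : 0 ≤ L := hLeq ▸ abs_nonneg _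
    have hlL : ∀ n, |l n| ≤ L := fun n => hLeq ▸ hn₀ n
    set F : M → ℝ := fun w => ∑' n, l n * f n w with hF
    have hFeval : ∀ w n, f n w ≠ 0 → F w = l n * f n w := by
      intro w n hn
      exact tsum_eq_single n (fun m hm => by rw [hdisj w n m (Ne.symm hm) hn, mul_zero])
    have hFzero : ∀ w, (∀ n, f n w = 0) → F w = 0 := by
      intro w h
      have : F w = ∑' (n : ℕ), (0:ℝ) := tsum_congr (fun n => by rw [h n, mul_zero])
      rw [this, tsum_zero]
    have hFlip : ∀ v w, |F v - F w| ≤ L * dist v w := by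
      intro v w
      by_cases hv : ∃ n, f n v ≠ 0
      · obtain ⟨n, hn⟩ := hv
        by_cases hw : ∃ m, f m w ≠ 0
        · obtain ⟨m, hm⟩ := hw
          rw [hFeval v n hn, hFeval w m hm]
          by_cases hnm : n = m
          · subst hnm
            rw [← mul_sub, abs_mul]
            exact mul_le_mul (hlL n) (hf_lip n v w) (abs_nonneg _) hL0
          · have h1 := hf_supp n v hn
            have h2 := hf_supp m w hm
            have h3 := hsep n m hnm
            have htri : dist (x n) (x m) ≤ dist (x n) v + dist v w + dist w (x m) :=
              dist_triangle4 _ _ _ _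
            rw [dist_comm (x n) v] at htri
            have hsum : f n v + f m w ≤ dist v w := by
              have h5 := hf_le n v
              have h6 := hf_le m w
              have h7 := hepos n
              have h8 := hepos m
              linarith
            calc |l n * f n v - l m * f m w|
                ≤ |l n * f n v| + |l m * f m w| := by
                  have := abs_sub_le (l n * f n v) 0 (l m * f m w)
                  simpa using this
              _ = |l n| * f n v + |l m| * f m w := by
                  rw [abs_mul, abs_mul, abs_of_nonneg (hf_nonneg n v),
                    abs_of_nonneg (hf_nonneg m w)]
              _ ≤ L * f n v + L * f m w :=
                  add_le_add (mul_le_mul_of_nonneg_right (hlL n) (hf_nonneg n v))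
                    (mul_le_mul_of_nonneg_right (hlL m) (hf_nonneg m w))
              _ = L * (f n v + f m w) := by ring
              _ ≤ L * dist v w := mul_le_mul_of_nonneg_left hsum hL0
        · push_neg at hw
          rw [hFeval v n hn, hFzero w hw, sub_zero, abs_mul]
          calc |l n| * |f n v| = |l n| * |f n v - f n w| := by rw [hw n, sub_zero]
            _ ≤ L * dist v w := mul_le_mul (hlL n) (hf_lip n v w) (abs_nonneg _) hL0
      · push_neg at hv
        by_cases hw : ∃ m, f m w ≠ 0
        · obtain ⟨m, hm⟩ := hw
          rw [hFzero v hv, hFeval w m hm, zero_sub, abs_neg, abs_mul]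
          calc |l m| * |f m w| = |l m| * |f m w - f m v| := by rw [hv m, sub_zero]
            _ ≤ L * dist w v := mul_le_mul (hlL m) (hf_lip m w v) (abs_nonneg _) hL0
            _ = L * dist v w := by rw [dist_comm]
        · push_neg at hw
          rw [hFzero v hv, hFzero w hw, sub_self, abs_zero]
          exact mul_nonneg hL0 dist_nonneg
    obtain ⟨y, hy1, hy2, hy3⟩ := hnear n₀
    have hfy : f n₀ y = e n₀ - dist y (x n₀) := max_eq_left (by linarith)
    have hfy0 : f n₀ y ≠ 0 := by rw [hfy]; intro h; linarith [hy3, hy2]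
    have hfx0 : f n₀ (x n₀) ≠ 0 := by rw [hf_self n₀]; exact (hepos n₀).ne'
    have hFx : F (x n₀) = l n₀ * e n₀ := by rw [hFeval _ n₀ hfx0, hf_self]
    have hFy : F y = l n₀ * (e n₀ - dist y (x n₀)) := by rw [hFeval _ n₀ hfy0, hfy]
    have hdiff : F (x n₀) - F y = l n₀ * dist y (x n₀) := by rw [hFx, hFy]; ring
    have hdxy : dist (x n₀) y = dist y (x n₀) := dist_comm _ _
    have hlipN : lipNorm F = L := by
      refine lipNorm_eq_of hFlip ⟨x n₀, y, hy1.symm, ?_⟩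
      rw [hdiff, abs_mul, abs_of_nonneg dist_nonneg, hdxy, hLeq]
    refine ⟨hFlip, hlipN, ?_⟩
    rcases le_or_gt 0 (l n₀) with h | h
    · refine ⟨x n₀, y, hy1.symm, ?_⟩
      rw [hlipN, hLeq, hdxy, hdiff, mul_div_assoc, div_self hy2.ne', mul_one,
        abs_of_nonneg h]
    · refine ⟨y, x n₀, hy1, ?_⟩
      have hdiff' : F y - F (x n₀) = (-l n₀) * dist y (x n₀) := by
        rw [hFx, hFy]; ring
      rw [hlipN, hLeq, hdiff', mul_div_assoc, div_self hy2.ne', mul_one, abs_of_neg h]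
end

section
/- Let M be a proper pointed metric space (every closed bounded subset is compact). Then every function f in S(M) strongly attains its Lipschitz norm, where S(M) = {f ∈ Lip_0(M) : lim_{ε→0} sup_{0<d(x,y)<ε} |f(x)-f(y)|/d(x,y) = 0 and lim_{r→∞} sup_{x or y ∉ B(0,r)} |f(x)-f(y)|/d(x,y) = 0}. -/
open Metric Set Filter Topology ZeroAtInfty

/-- on a proper pointed metric space, every function in `S(M)` strongly
attains its Lipschitz norm. -/
theorem stmt7 {M : Type*} [MetricSpace M] [ProperSpace M] [Nontrivial M] (z : M)
    (f : M → ℝ) (hf0 : f z = 0) (hlip : ∃ K : ℝ, IsLipWith K f)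
    (hlittle : ∀ δ > (0 : ℝ), ∃ ε > (0 : ℝ), ∀ x y : M,
      0 < dist x y → dist x y < ε → |f x - f y| ≤ δ * dist x y)
    (hflat : ∀ δ > (0 : ℝ), ∃ r > (0 : ℝ), ∀ x y : M, x ≠ y →
      (x ∉ ball z r ∨ y ∉ ball z r) → |f x - f y| ≤ δ * dist x y) :
    StronglyAttains f := by
  obtain ⟨K, hK⟩ := hlip
  set S : Set ℝ := {r : ℝ | ∃ x y : M, x ≠ y ∧ r = |f x - f y| / dist x y} with hS
  obtain ⟨a, b, hab⟩ := exists_pair_ne M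
  have hSne : S.Nonempty := ⟨_, a, b, hab, rfl⟩
  have hbdd : BddAbove S := by
    refine ⟨K, ?_⟩
    rintro s ⟨x, y, hxy, rfl⟩
    exact (div_le_iff₀ (dist_pos.2 hxy)).2 (hK x y)
  set L : ℝ := lipNorm f with hL
  have hLS : L = sSup S := rfl
  have hmem_le : ∀ s ∈ S, s ≤ L := fun s hs => le_csSup hbdd hs
  have hL0 : 0 ≤ L := le_csSup hbdd ⟨a, b, hab, rfl⟩ |>.trans' (by positivity)
  rcases eq_or_lt_of_le hL0 with hL0' | hLpos
  · -- L = 0 : f is constant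
    refine ⟨a, b, hab, ?_⟩
    have : ∀ x y : M, f x = f y := by
      intro x y
      rcases eq_or_ne x y with rfl | hxy
      · rfl
      · have h1 : |f x - f y| / dist x y ≤ L := hmem_le _ ⟨x, y, hxy, rfl⟩
        have h2 : 0 ≤ |f x - f y| / dist x y := by positivity
        have h3 : |f x - f y| / dist x y = 0 := le_antisymm (h1.trans hL0'.symm.le) h2
        have hd := dist_pos.2 hxy
        have := (div_eq_zero_iff.1 h3).resolve_right hd.ne'
        linarith [abs_nonneg (f x - f y), le_abs_self (f x - f y), neg_abs_le (f x - f y)]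
    rw [this a b, sub_self, zero_div]
    exact hL0'.trans hL
  · -- L > 0
    obtain ⟨ε, hε, hsmall⟩ := hlittle (L / 2) (by linarith)
    obtain ⟨r, hr, hfar⟩ := hflat (L / 2) (by linarith)
    -- pairs with big quotient live in the compact set C
    have hbig : ∀ x y : M, x ≠ y → L / 2 < |f x - f y| / dist x y →
        x ∈ closedBall z r ∧ y ∈ closedBall z r ∧ ε ≤ dist x y := by
      intro x y hxy hq
      have hd := dist_pos.2 hxy
      have hdε : ε ≤ dist x y := by
        by_contra h
        have := hsmall x y hd (not_le.1 h)
        exact absurd ((div_le_iff₀ hd).2 this) (not_le.2 hq)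
      have hballs : x ∈ ball z r ∧ y ∈ ball z r := by
        by_contra h
        have h' : x ∉ ball z r ∨ y ∉ ball z r := by tauto
        have := hfar x y hxy h'
        exact absurd ((div_le_iff₀ hd).2 this) (not_le.2 hq)
      exact ⟨ball_subset_closedBall hballs.1, ball_subset_closedBall hballs.2, hdε⟩
    set C : Set (M × M) :=
      (closedBall z r ×ˢ closedBall z r) ∩ {p : M × M | ε ≤ dist p.1 p.2} with hC
    have hCcpt : IsCompact C :=
      ((isCompact_closedBall z r).prod (isCompact_closedBall z r)).inter_right
        (isClosed_le continuous_const continuous_dist)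
    obtain ⟨s₀, ⟨x₀, y₀, hxy₀, hs₀⟩, hs₀gt⟩ :=
      exists_lt_of_lt_csSup hSne (show L / 2 < sSup S by rw [← hLS]; linarith)
    have hx₀ := hbig x₀ y₀ hxy₀ (hs₀ ▸ hs₀gt)
    have hCne : C.Nonempty := ⟨(x₀, y₀), ⟨⟨hx₀.1, hx₀.2.1⟩, hx₀.2.2⟩⟩
    have hfc : Continuous f := by
      have : LipschitzWith K.toNNReal f := by
        refine LipschitzWith.of_dist_le_mul fun x y => ?_
        rw [Real.dist_eq]
        exact (hK x y).trans (mul_le_mul_of_nonneg_right (Real.le_coe_toNNReal K) dist_nonneg)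
      exact this.continuous
    set g : M × M → ℝ := fun p => |f p.1 - f p.2| / dist p.1 p.2 with hg
    have hgc : ContinuousOn g C := by
      apply ContinuousOn.div
      · exact (((hfc.comp continuous_fst).sub (hfc.comp continuous_snd)).abs).continuousOn
      · exact continuous_dist.continuousOn
      · rintro ⟨x, y⟩ ⟨_, hd⟩
        exact ne_of_gt (lt_of_lt_of_le hε hd)
    obtain ⟨⟨x, y⟩, hpC, hmax⟩ := hCcpt.exists_isMaxOn hCne hgc
    have hdxy : 0 < dist x y := lt_of_lt_of_le hε hpC.2
    have hxy : x ≠ y := dist_pos.1 hdxy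
    have hgle : g (x, y) ≤ L := hmem_le _ ⟨x, y, hxy, rfl⟩
    have hLle : L ≤ g (x, y) := by
      rw [hLS]
      apply csSup_le hSne
      rintro s ⟨u, v, huv, rfl⟩
      have hmem₀ : ((x₀, y₀) : M × M) ∈ C := ⟨⟨hx₀.1, hx₀.2.1⟩, hx₀.2.2⟩
      have hq₀ : L / 2 < g (x₀, y₀) := by
        show L / 2 < |f x₀ - f y₀| / dist x₀ y₀
        rw [← hs₀]; exact hs₀gt
      have hgx : L / 2 < g (x, y) := lt_of_lt_of_le hq₀ (hmax hmem₀)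
      rcases le_or_gt (|f u - f v| / dist u v) (L / 2) with h | h
      · linarith
      · have hb := hbig u v huv h
        have hmemuv : ((u, v) : M × M) ∈ C := ⟨⟨hb.1, hb.2.1⟩, hb.2.2⟩
        exact hmax hmemuv
    have hgL : |f x - f y| / dist x y = L := le_antisymm hgle hLle
    rcases le_or_gt 0 (f x - f y) with hsgn | hsgn
    · refine ⟨x, y, hxy, ?_⟩
      rw [← abs_of_nonneg hsgn]
      exact hgL.trans hL
    · refine ⟨y, x, hxy.symm, ?_⟩
      have h2 : f y - f x = |f x - f y| := by rw [abs_of_neg hsgn]; ring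
      rw [h2, dist_comm]
      exact hgL.trans hL
end

section
/- Let M be an infinite complete metric space that is discrete but not uniformly discrete. Then SNA(M) contains a closed linear subspace of Lip_0(M) linearly isometric to c_0. -/
open Metric Set Filter Topology ZeroAtInfty

/-!
Write `ρ x = infDist x {x}ᶜ`, which is positive at every isolated point. If `u ≠ v` and
`dist u v < ρ u + ρ v`, the function supported on `{u, v}` whose values there differ by
`dist u v` and have absolute values `ρ u - g`, `ρ v - g`, with `2 g = ρ u + ρ v - dist u v > 0`,
is 1-Lipschitz and attains its norm on `(u, v)`. Such pairs exist with arbitrarily small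
`dist u v`: otherwise, jumping each time to a near-nearest neighbour halves `ρ`, giving a
non-stabilising Cauchy sequence, impossible in a complete space of isolated points. Choosing each
pair shorter than the slack `g` of all earlier pairs, the pairs are disjoint and the peaks do not
interact, so `∑ lₙ fₙ` is `sup |lₙ|`-Lipschitz with the norm attained on the pair where `|lₙ|` is
largest.
-/

open Function

section Discrete

variable {M : Type*} [MetricSpace M]

lemma infDist_compl_singleton_le_dist {x y : M} (h : y ≠ x) : infDist x {x}ᶜ ≤ dist x y :=
  infDist_le_dist_of_mem (mem_compl_singleton_iff.2 h)

lemma infDist_compl_singleton_pos [Nontrivial M] {x : M} {ρ : ℝ} (hρ : 0 < ρ)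
    (hx : ball x ρ = {x}) : 0 < infDist x {x}ᶜ := by
  refine hρ.trans_le ((le_infDist (nonempty_compl_of_nontrivial x)).2 fun y hy => ?_)
  by_contra! h
  exact hy (hx ▸ mem_ball'.2 h)

lemma CauchySeq.exists_eventually_eq [CompleteSpace M] (hr : ∀ x : M, 0 < infDist x {x}ᶜ)
    {u : ℕ → M} (hu : CauchySeq u) : ∃ x, ∀ᶠ n in atTop, u n = x := by
  obtain ⟨x, hx⟩ := cauchySeq_tendsto_of_complete hu
  refine ⟨x, (hx.eventually (ball_mem_nhds x (hr x))).mono fun n hn => ?_⟩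
  by_contra h
  exact (infDist_compl_singleton_le_dist h).not_gt (mem_ball'.1 hn)

end Discrete

section IsolatedPairs

variable {M : Type*} [MetricSpace M]

def IsIsolatedPair (u v : M) : Prop :=
  u ≠ v ∧ dist u v < infDist u {u}ᶜ + infDist v {v}ᶜ

noncomputable def pairGap (u v : M) : ℝ :=
  (infDist u {u}ᶜ + infDist v {v}ᶜ - dist u v) / 2

open Classical in
noncomputable def pairPeak (u v : M) (w : M) : ℝ :=
  if w = u then (dist u v + infDist u {u}ᶜ - infDist v {v}ᶜ) / 2
  else if w = v then (infDist u {u}ᶜ - infDist v {v}ᶜ - dist u v) / 2 else 0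

lemma IsIsolatedPair.pairGap_pos {u v : M} (h : IsIsolatedPair u v) : 0 < pairGap u v := by
  unfold pairGap; linarith [h.2]

lemma exists_isIsolatedPair_dist_lt [CompleteSpace M] (hr : ∀ x : M, 0 < infDist x {x}ᶜ)
    (hsmall : ∀ ε > 0, ∃ x y : M, x ≠ y ∧ dist x y < ε) {ε : ℝ} (hε : 0 < ε) :
    ∃ u v : M, IsIsolatedPair u v ∧ dist u v < ε := by
  by_contra! hbad
  have hnear : ∀ u : M, ∃ v, v ≠ u ∧ dist u v < 3 / 2 * infDist u {u}ᶜ := fun u => by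
    have hne : ({u}ᶜ : Set M).Nonempty := by
      by_contra! h
      simpa [h] using hr u
    exact (infDist_lt_iff hne).1 (by linarith [hr u])
  choose next hnext_ne hnext using hnear
  obtain ⟨x₀, y₀, hxy₀, hd₀⟩ := hsmall (2 / 3 * ε) (by positivity)
  have hx₀ : infDist x₀ {x₀}ᶜ < 2 / 3 * ε :=
    (infDist_compl_singleton_le_dist hxy₀.symm).trans_lt hd₀
  set r₀ := infDist x₀ {x₀}ᶜ
  set u : ℕ → M := fun k => next^[k] x₀
  have hu : ∀ k, u (k + 1) = next (u k) := fun k => iterate_succ_apply' next k x₀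
  -- `(u k, u (k + 1))` is closer than `ε` but not isolated, so the radius halves.
  have hhalf : ∀ k, infDist (u k) {u k}ᶜ ≤ r₀ / 2 ^ k := by
    intro k
    induction k with
    | zero => simp [u, r₀]
    | succ k ih =>
      have hd := hnext (u k)
      rw [← hu] at hd
      have hr₀ : 0 ≤ r₀ := infDist_nonneg
      have hk : r₀ / 2 ^ k ≤ r₀ := div_le_self hr₀ (one_le_pow₀ one_le_two)
      have hnot : ¬ IsIsolatedPair (u k) (u (k + 1)) := fun h => (hbad _ _ h).not_gt (by linarith)
      have hradii :
          infDist (u k) {u k}ᶜ + infDist (u (k + 1)) {u (k + 1)}ᶜ ≤ dist (u k) (u (k + 1)) :=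
        not_lt.1 fun h => hnot ⟨hu k ▸ (hnext_ne (u k)).symm, h⟩
      rw [pow_succ, ← div_div]
      linarith
  have hcauchy : CauchySeq u := cauchySeq_of_le_geometric_two (C := 3 * r₀) fun k => by
    calc dist (u k) (u (k + 1)) ≤ 3 / 2 * infDist (u k) {u k}ᶜ := by rw [hu]; exact (hnext _).le
      _ ≤ 3 / 2 * (r₀ / 2 ^ k) := by gcongr; exact hhalf k
      _ = 3 * r₀ / 2 / 2 ^ k := by ring
  obtain ⟨x, hx⟩ := hcauchy.exists_eventually_eq hr
  obtain ⟨k, hk, hk'⟩ := (hx.and ((tendsto_add_atTop_nat 1).eventually hx)).exists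
  exact hnext_ne (u k) (by rw [← hu, hk, hk'])

section PairPeak

variable {u v : M}

lemma infDist_le_dist_of_mem_pair (h : u ≠ v) {w : M} (hw : w ∈ ({u, v} : Set M)) :
    infDist w {w}ᶜ ≤ dist u v := by
  rcases hw with rfl | rfl
  · exact infDist_compl_singleton_le_dist h.symm
  · rw [dist_comm]; exact infDist_compl_singleton_le_dist h

lemma pairPeak_of_notMem {w : M} (hw : w ∉ ({u, v} : Set M)) : pairPeak u v w = 0 := by
  simp only [mem_insert_iff, mem_singleton_iff, not_or] at hw
  simp [pairPeak, hw.1, hw.2]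

lemma pairPeak_sub (h : u ≠ v) : pairPeak u v u - pairPeak u v v = dist u v := by
  rw [pairPeak, if_pos rfl, pairPeak, if_neg h.symm, if_pos rfl]
  ring

lemma abs_pairPeak_add_pairGap (h : u ≠ v) {w : M} (hw : w ∈ ({u, v} : Set M)) :
    |pairPeak u v w| + pairGap u v = infDist w {w}ᶜ := by
  have hu := infDist_le_dist_of_mem_pair h (mem_insert u {v})
  have hv := infDist_le_dist_of_mem_pair h (mem_insert_of_mem u (mem_singleton v))
  have hu₀ : 0 ≤ infDist u {u}ᶜ := infDist_nonneg
  have hv₀ : 0 ≤ infDist v {v}ᶜ := infDist_nonneg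
  rcases hw with rfl | rfl
  · rw [pairPeak, if_pos rfl, abs_of_nonneg (by linarith), pairGap]; ring
  · rw [pairPeak, if_neg h.symm, if_pos rfl, abs_of_nonpos (by linarith), pairGap]; ring

lemma IsIsolatedPair.abs_pairPeak_le_dist (h : IsIsolatedPair u v) {w : M}
    (hw : w ∈ ({u, v} : Set M)) : |pairPeak u v w| ≤ dist u v := by
  linarith [abs_pairPeak_add_pairGap h.1 hw, infDist_le_dist_of_mem_pair h.1 hw, h.pairGap_pos]

lemma IsIsolatedPair.abs_pairPeak_le_dist_of_notMem (h : IsIsolatedPair u v) (x : M) {y : M}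
    (hy : y ∉ ({u, v} : Set M)) : |pairPeak u v x| ≤ dist x y := by
  by_cases hx : x ∈ ({u, v} : Set M)
  · have hxy : y ≠ x := fun hyx => hy (hyx ▸ hx)
    linarith [abs_pairPeak_add_pairGap h.1 hx, infDist_compl_singleton_le_dist hxy, h.pairGap_pos]
  · rw [pairPeak_of_notMem hx, abs_zero]
    exact dist_nonneg

lemma IsIsolatedPair.isLipWith_one_pairPeak (h : IsIsolatedPair u v) :
    IsLipWith 1 (pairPeak u v) := by
  intro x y
  rw [one_mul]
  by_cases hy : y ∈ ({u, v} : Set M)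
  · by_cases hx : x ∈ ({u, v} : Set M)
    · rcases hx with rfl | rfl <;> rcases hy with rfl | rfl
      · simp
      · rw [pairPeak_sub h.1, abs_of_nonneg dist_nonneg]
      · rw [abs_sub_comm, pairPeak_sub h.1, abs_of_nonneg dist_nonneg, dist_comm]
      · simp
    · rw [pairPeak_of_notMem hx, zero_sub, abs_neg, dist_comm]
      exact h.abs_pairPeak_le_dist_of_notMem y hx
  · rw [pairPeak_of_notMem hy, sub_zero]
    exact h.abs_pairPeak_le_dist_of_notMem x hy

end PairPeak

end IsolatedPairs

lemma exists_seq_lt_of_forall_exists_lt {α : Type*} {P : α → Prop} {s δ : α → ℝ}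
    (hs : ∀ ε > 0, ∃ a, P a ∧ s a < ε) (hδ : ∀ a, P a → 0 < δ a) {c : ℝ} (hc : 0 < c) :
    ∃ p : ℕ → α, (∀ n, P (p n)) ∧ (∀ n, s (p n) < c) ∧ ∀ m n, m < n → s (p n) < δ (p m) := by
  choose g hgP hgs using hs
  -- `b n` bounds `s` of the `n`-th term: the minimum of `c` and of `δ` of all earlier terms.
  let b : ℕ → {ε : ℝ // 0 < ε} := fun n => Nat.rec ⟨c, hc⟩
    (fun _ e => ⟨min e (δ (g e e.2)), lt_min e.2 (hδ _ (hgP e e.2))⟩) n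
  have hb_succ : ∀ n, (b (n + 1)).1 = min (b n).1 (δ (g _ (b n).2)) := fun n => rfl
  have hb_anti : Antitone fun n => (b n).1 :=
    antitone_nat_of_succ_le fun n => (hb_succ n).trans_le (min_le_left _ _)
  refine ⟨fun n => g _ (b n).2, fun n => hgP _ _,
    fun n => (hgs _ _).trans_le (hb_anti (Nat.zero_le n)), fun m n hmn => ?_⟩
  calc s (g _ (b n).2) < (b n).1 := hgs _ _
    _ ≤ (b (m + 1)).1 := hb_anti hmn
    _ ≤ δ (g _ (b m).2) := (hb_succ m).trans_le (min_le_right _ _)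

section DisjointSupports

variable {M : Type*} {f : ℕ → M → ℝ} {S : ℕ → Set M}

lemma exists_forall_ne_notMem (hS : Pairwise (Disjoint on S)) (x : M) :
    ∃ n, ∀ m ≠ n, x ∉ S m := by
  by_cases hx : ∃ n, x ∈ S n
  · obtain ⟨n, hn⟩ := hx
    exact ⟨n, fun m hmn hm => Set.disjoint_left.1 (hS hmn) hm hn⟩
  · push Not at hx
    exact ⟨0, fun m _ => hx m⟩

lemma tsum_mul_eq_of_forall_ne (hfS : ∀ n, ∀ x ∉ S n, f n x = 0) (l : ℕ → ℝ) {x : M} {n : ℕ}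
    (hx : ∀ m ≠ n, x ∉ S m) : ∑' k, l k * f k x = l n * f n x :=
  tsum_eq_single n fun m hm => by rw [hfS m x (hx m hm), mul_zero]

lemma isLipWith_tsum_mul [MetricSpace M] (hS : Pairwise (Disjoint on S))
    (hfS : ∀ n, ∀ x ∉ S n, f n x = 0) (hf : ∀ n, IsLipWith 1 (f n))
    (hsep : ∀ n m, n ≠ m → ∀ x ∈ S n, ∀ y ∈ S m, |f n x| + |f m y| ≤ dist x y)
    {l : ℕ → ℝ} {K : ℝ} (hl : ∀ n, |l n| ≤ K) : IsLipWith K fun w => ∑' n, l n * f n w := by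
  have hK : 0 ≤ K := (abs_nonneg _).trans (hl 0)
  intro x y
  dsimp only
  obtain ⟨n, hx⟩ := exists_forall_ne_notMem hS x
  obtain ⟨m, hy⟩ := exists_forall_ne_notMem hS y
  rw [tsum_mul_eq_of_forall_ne hfS l hx, tsum_mul_eq_of_forall_ne hfS l hy]
  rcases eq_or_ne n m with rfl | hnm
  · rw [← mul_sub, abs_mul]
    exact mul_le_mul (hl n) (by simpa using hf n x y) (abs_nonneg _) hK
  have hfx : |f n x| + |f m y| ≤ dist x y := by
    by_cases hxn : x ∈ S n
    · by_cases hym : y ∈ S m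
      · exact hsep n m hnm x hxn y hym
      · simpa [hfS m y hym, hfS n y (hy n hnm)] using hf n x y
    · simpa [hfS n x hxn, hfS m x (hx m hnm.symm), abs_sub_comm] using hf m x y
  calc |l n * f n x - l m * f m y| ≤ |l n| * |f n x| + |l m| * |f m y| := by
        rw [← abs_mul, ← abs_mul]; exact abs_sub _ _
    _ ≤ K * |f n x| + K * |f m y| := by gcongr <;> exact hl _
    _ ≤ K * dist x y := by rw [← mul_add]; exact mul_le_mul_of_nonneg_left hfx hK

end DisjointSupports

section PairSeq

variable {M : Type*} [MetricSpace M] {u v : ℕ → M}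

def IsGappedPairSeq (u v : ℕ → M) : Prop :=
  (∀ n, IsIsolatedPair (u n) (v n)) ∧ ∀ m n, m < n → dist (u n) (v n) < pairGap (u m) (v m)

lemma IsGappedPairSeq.dist_add_abs_pairPeak_lt (h : IsGappedPairSeq u v) {m n : ℕ} (hmn : m < n)
    {y : M} (hy : y ∈ ({u m, v m} : Set M)) :
    dist (u n) (v n) + |pairPeak (u m) (v m) y| < infDist y {y}ᶜ := by
  linarith [abs_pairPeak_add_pairGap (h.1 m).1 hy, h.2 m n hmn]

lemma IsGappedPairSeq.pairwise_disjoint (h : IsGappedPairSeq u v) :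
    Pairwise (Disjoint on (fun n => ({u n, v n} : Set M))) := by
  have key : ∀ m n, m < n → Disjoint ({u n, v n} : Set M) {u m, v m} := fun m n hmn =>
    Set.disjoint_left.2 fun x hxn hxm => by
      linarith [h.dist_add_abs_pairPeak_lt hmn hxm, abs_nonneg (pairPeak (u m) (v m) x),
        infDist_le_dist_of_mem_pair (h.1 n).1 hxn]
  intro m n hmn
  rcases hmn.lt_or_gt with hlt | hlt
  · exact (key m n hlt).symm
  · exact key n m hlt

lemma IsGappedPairSeq.abs_pairPeak_add_abs_pairPeak_le_dist (h : IsGappedPairSeq u v) {m n : ℕ}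
    (hnm : n ≠ m)
    {x y : M} (hx : x ∈ ({u n, v n} : Set M)) (hy : y ∈ ({u m, v m} : Set M)) :
    |pairPeak (u n) (v n) x| + |pairPeak (u m) (v m) y| ≤ dist x y := by
  wlog hmn : m < n generalizing m n x y
  · rw [add_comm, dist_comm]
    exact this hnm.symm hy hx (hnm.lt_or_gt.resolve_right hmn)
  have hxy : y ≠ x := fun hyx =>
    Set.disjoint_left.1 (h.pairwise_disjoint hnm.symm) hy (hyx ▸ hx)
  linarith [h.dist_add_abs_pairPeak_lt hmn hy, (h.1 n).abs_pairPeak_le_dist hx,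
    infDist_compl_singleton_le_dist hxy.symm, dist_comm x y]

lemma IsGappedPairSeq.isLipWith_tsum_mul_pairPeak (h : IsGappedPairSeq u v) {l : ℕ → ℝ}
    {K : ℝ} (hl : ∀ n, |l n| ≤ K) : IsLipWith K fun w => ∑' n, l n * pairPeak (u n) (v n) w :=
  isLipWith_tsum_mul h.pairwise_disjoint (fun _ _ => pairPeak_of_notMem)
    (fun n => (h.1 n).isLipWith_one_pairPeak)
    (fun _ _ hnm _ hx _ hy => h.abs_pairPeak_add_abs_pairPeak_le_dist hnm hx hy) hl

lemma IsGappedPairSeq.abs_tsum_mul_pairPeak_sub (h : IsGappedPairSeq u v) (l : ℕ → ℝ)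
    (n : ℕ) :
    |(∑' k, l k * pairPeak (u k) (v k) (u n)) - ∑' k, l k * pairPeak (u k) (v k) (v n)| =
      |l n| * dist (u n) (v n) := by
  have hmem : ∀ w ∈ ({u n, v n} : Set M), ∀ m ≠ n, w ∉ ({u m, v m} : Set M) :=
    fun w hw m hmn hwm => Set.disjoint_left.1 (h.pairwise_disjoint hmn) hwm hw
  rw [tsum_mul_eq_of_forall_ne (fun _ _ => pairPeak_of_notMem) l (hmem _ (mem_insert _ _)),
    tsum_mul_eq_of_forall_ne (fun _ _ => pairPeak_of_notMem) l (hmem _ (mem_insert_of_mem _ rfl)),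
    ← mul_sub, pairPeak_sub (h.1 n).1, abs_mul, abs_of_nonneg dist_nonneg]

lemma exists_seq_isIsolatedPair [CompleteSpace M] (hr : ∀ x : M, 0 < infDist x {x}ᶜ)
    (hsmall : ∀ ε > 0, ∃ x y : M, x ≠ y ∧ dist x y < ε) {c : ℝ} (hc : 0 < c) :
    ∃ u v : ℕ → M, IsGappedPairSeq u v ∧ ∀ n, dist (u n) (v n) < c := by
  obtain ⟨p, hp, hpc, hgap⟩ := exists_seq_lt_of_forall_exists_lt
    (P := fun p : M × M => IsIsolatedPair p.1 p.2) (s := fun p => dist p.1 p.2)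
    (δ := fun p => pairGap p.1 p.2)
    (fun ε hε => let ⟨u, v, h⟩ := exists_isIsolatedPair_dist_lt hr hsmall hε; ⟨(u, v), h⟩)
    (fun p hp => hp.pairGap_pos) hc
  exact ⟨fun n => (p n).1, fun n => (p n).2, ⟨hp, hgap⟩, hpc⟩

end PairSeq

section LipNorm

variable {M : Type*} [MetricSpace M] {f : M → ℝ} {K : ℝ} {x y : M}

lemma IsLipWith.lipNorm_eq (hf : IsLipWith K f) (hxy : x ≠ y)
    (h : |f x - f y| = K * dist x y) : lipNorm f = K := by
  have hK : K ∈ {r : ℝ | ∃ a b : M, a ≠ b ∧ r = |f a - f b| / dist a b} :=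
    ⟨x, y, hxy, by rw [h, mul_div_cancel_right₀ _ (dist_ne_zero.2 hxy)]⟩
  have hub : ∀ r ∈ {r : ℝ | ∃ a b : M, a ≠ b ∧ r = |f a - f b| / dist a b}, r ≤ K := by
    rintro r ⟨a, b, hab, rfl⟩
    exact (div_le_iff₀ (dist_pos.2 hab)).2 (hf a b)
  exact le_antisymm (csSup_le ⟨K, hK⟩ hub) (le_csSup ⟨K, hub⟩ hK)

lemma IsLipWith.stronglyAttains (hf : IsLipWith K f) (hxy : x ≠ y)
    (h : |f x - f y| = K * dist x y) : StronglyAttains f := by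
  rw [StronglyAttains, hf.lipNorm_eq hxy h]
  rcases le_total 0 (f x - f y) with hsgn | hsgn
  · exact ⟨x, y, hxy, by
      rw [← abs_of_nonneg hsgn, h, mul_div_cancel_right₀ _ (dist_ne_zero.2 hxy)]⟩
  · exact ⟨y, x, hxy.symm, by
      rw [← neg_sub, ← abs_of_nonpos hsgn, h, dist_comm,
        mul_div_cancel_right₀ _ (dist_ne_zero.2 hxy.symm)]⟩

end LipNorm

lemma exists_forall_abs_le_of_tendsto_zero {l : ℕ → ℝ} (hl : Tendsto l atTop (𝓝 0)) :
    ∃ n, ∀ m, |l m| ≤ |l n| := by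
  by_cases h : ∀ m, l m = 0
  · exact ⟨0, fun m => by simp [h]⟩
  push Not at h
  obtain ⟨k, hk⟩ := h
  have hev : ∀ᶠ m in atTop, |l m| ≤ |l k| :=
    hl.abs.eventually (eventually_le_nhds (by simpa using hk))
  exact continuous_of_discreteTopology.exists_forall_ge' k (by rwa [cocompact_eq_atTop])

theorem stmt9_general {M : Type*} [MetricSpace M] [CompleteSpace M] (z : M)
    (hdisc : ∀ x : M, ∃ r > (0 : ℝ), ball x r = {x})
    (hnud : ¬ UnifDiscreteOn (Set.univ : Set M)) :
    ∃ f : ℕ → M → ℝ, (∀ n, f n z = 0 ∧ IsLipWith 1 (f n) ∧ lipNorm (f n) = 1) ∧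
      ∀ l : ℕ → ℝ, Tendsto l atTop (𝓝 0) →
        IsLipWith (⨆ n, |l n|) (fun w => ∑' n, l n * f n w) ∧
        lipNorm (fun w => ∑' n, l n * f n w) = ⨆ n, |l n| ∧
        StronglyAttains (fun w => ∑' n, l n * f n w) := by
  have hsmall : ∀ ε > 0, ∃ x y : M, x ≠ y ∧ dist x y < ε := by
    simpa [UnifDiscreteOn] using hnud
  obtain ⟨x, y, hxy, -⟩ := hsmall 1 one_pos
  have : Nontrivial M := ⟨x, y, hxy⟩
  have hr : ∀ x : M, 0 < infDist x {x}ᶜ := fun x =>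
    let ⟨_, hρ, hx⟩ := hdisc x; infDist_compl_singleton_pos hρ hx
  obtain ⟨u, v, hseq, hz⟩ := exists_seq_isIsolatedPair hr hsmall (hr z)
  have hne : ∀ n, u n ≠ v n := fun n => (hseq.1 n).1
  have hf : ∀ n, IsLipWith 1 (pairPeak (u n) (v n)) := fun n => (hseq.1 n).isLipWith_one_pairPeak
  refine ⟨fun n => pairPeak (u n) (v n), fun n => ⟨pairPeak_of_notMem fun hzn =>
    (infDist_le_dist_of_mem_pair (hne n) hzn).not_gt (hz n), hf n, (hf n).lipNorm_eq (hne n) ?_⟩,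
    fun l hl => ?_⟩
  · rw [pairPeak_sub (hne n), one_mul, abs_of_nonneg dist_nonneg]
  obtain ⟨n, hn⟩ := exists_forall_abs_le_of_tendsto_zero hl
  have hlip := hseq.isLipWith_tsum_mul_pairPeak hn
  rw [ciSup_eq_of_forall_le_of_forall_lt_exists_gt hn fun _ h => ⟨n, h⟩]
  exact ⟨hlip, hlip.lipNorm_eq (hne n) (hseq.abs_tsum_mul_pairPeak_sub l n),
    hlip.stronglyAttains (hne n) (hseq.abs_tsum_mul_pairPeak_sub l n)⟩

/-- if `M` is an infinite complete metric space which is discrete but not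
uniformly discrete, then `SNA(M)` contains an isometric copy of `c₀`. -/
theorem stmt9 {M : Type*} [MetricSpace M] [CompleteSpace M] [Infinite M] (z : M)
    (hdisc : ∀ x : M, ∃ r > (0 : ℝ), ball x r = {x})
    (hnud : ¬ UnifDiscreteOn (Set.univ : Set M)) :
    ∃ f : ℕ → M → ℝ, (∀ n, f n z = 0 ∧ IsLipWith 1 (f n) ∧ lipNorm (f n) = 1) ∧
      ∀ l : ℕ → ℝ, Tendsto l atTop (𝓝 0) →
        IsLipWith (⨆ n, |l n|) (fun w => ∑' n, l n * f n w) ∧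
        lipNorm (fun w => ∑' n, l n * f n w) = ⨆ n, |l n| ∧
        StronglyAttains (fun w => ∑' n, l n * f n w) :=
  stmt9_general z hdisc hnud
end

section
/- Let M be a pointed metric space and for x ∈ M define R(x) = sup{R ≥ 0 : closedBall(x,R) = {x}}. Suppose there are sequences (x_n), (y_n) in M with x_n ≠ y_n for all n, {x_n,y_n} ∩ {x_m,y_m} = ∅ for n ≠ m, and d(x_n,y_n) < R(x_n) + R(y_n) for all n. Then SNA(M) contains a linear subspace isomorphic to c_0; more precisely, the functions f_n taking value (R(x_n)/(R(x_n)+R(y_n)))·d(x_n,y_n) at x_n, value −(R(y_n)/(R(x_n)+R(y_n)))·d(x_n,y_n) at y_n, and 0 elsewhere (assuming the base point is not among the x_n,y_n) are norm-one Lipschitz functions, the map e_n ↦ f_n extends to an isomorphism T : c_0 → Lip_0(M) with ‖(λ_n)‖_∞ ≤ ‖Σ λ_n f_n‖ ≤ 2‖(λ_n)‖_∞, and every function in T(c_0) strongly attains its Lipschitz norm. -/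
open Metric Set Filter Topology ZeroAtInfty

lemma isolRad_nonneg' {M : Type*} [MetricSpace M] (x : M) : 0 ≤ isolRad x :=
  Real.sSup_nonneg (fun _ hr => hr.1)

lemma isolRad_le_dist' {M : Type*} [MetricSpace M] {x w : M} (h : w ≠ x) :
    isolRad x ≤ dist x w := by
  refine Real.sSup_le ?_ dist_nonneg
  rintro R ⟨hR0, hRball⟩
  by_contra hlt
  push_neg at hlt
  have hw : w ∈ Metric.closedBall x R := by
    rw [Metric.mem_closedBall, dist_comm]
    exact hlt.le
  rw [hRball] at hw
  exact h hw

lemma lipNorm_eq_of_attain {M : Type*} [MetricSpace M] {f : M → ℝ} {K : ℝ} (hK : 0 ≤ K)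
    (hb : ∀ u v : M, u ≠ v → |f u - f v| ≤ K * dist u v)
    {p q : M} (hpq : p ≠ q) (ha : |f p - f q| = K * dist p q) : lipNorm f = K := by
  unfold lipNorm
  apply le_antisymm
  · refine Real.sSup_le ?_ hK
    rintro r ⟨u, v, huv, rfl⟩
    rw [div_le_iff₀ (dist_pos.mpr huv)]
    exact hb u v huv
  · refine le_csSup ⟨K, ?_⟩ ⟨p, q, hpq, ?_⟩
    · rintro r ⟨u, v, huv, rfl⟩
      rw [div_le_iff₀ (dist_pos.mpr huv)]
      exact hb u v huv
    · rw [ha, mul_div_cancel_right₀ _ (dist_pos.mpr hpq).ne']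

lemma exists_max_abs' {l : ℕ → ℝ} (hl : Tendsto l atTop (𝓝 0)) :
    ∃ n₀, ∀ n, |l n| ≤ |l n₀| := by
  by_cases h : ∀ n, l n = 0
  · exact ⟨0, fun n => by simp [h]⟩
  push_neg at h
  obtain ⟨k, hk⟩ := h
  have hk' : 0 < |l k| := abs_pos.mpr hk
  obtain ⟨N, hN⟩ := Metric.tendsto_atTop.mp hl (|l k|) hk'
  obtain ⟨n₀, hn₀mem, hn₀⟩ := Finset.exists_max_image (Finset.range (max N k + 1))
    (fun n => |l n|) ⟨0, by simp⟩
  refine ⟨n₀, fun n => ?_⟩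
  by_cases hn : n ≤ max N k
  · exact hn₀ n (Finset.mem_range.mpr (by omega))
  · have h1 : |l n| < |l k| := by simpa [Real.dist_eq] using hN n (by omega)
    exact h1.le.trans (hn₀ k (Finset.mem_range.mpr (by omega)))


/-- if there are sequences of disjoint pairs `xₙ ≠ yₙ` with
`d(xₙ,yₙ) < R(xₙ) + R(yₙ)`, then the associated two-point functions span an isomorphic
copy of `c₀` inside `SNA(M)`. -/
theorem stmt10 {M : Type*} [MetricSpace M] [DecidableEq M] (z : M) (x y : ℕ → M)
    (hxy : ∀ n, x n ≠ y n)
    (hdisj : ∀ n m, n ≠ m → ({x n, y n} : Set M) ∩ {x m, y m} = ∅)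
    (hR : ∀ n, dist (x n) (y n) < isolRad (x n) + isolRad (y n))
    (hz : ∀ n, x n ≠ z ∧ y n ≠ z) :
    ∀ f : ℕ → M → ℝ,
      (∀ n, f n = fun w =>
        if w = x n then isolRad (x n) / (isolRad (x n) + isolRad (y n)) * dist (x n) (y n)
        else if w = y n then
          -(isolRad (y n) / (isolRad (x n) + isolRad (y n)) * dist (x n) (y n))
        else 0) →
      (∀ n, f n z = 0 ∧ lipNorm (f n) = 1) ∧
      (∀ l : ℕ → ℝ, Tendsto l atTop (𝓝 0) →
        IsLipWith (2 * ⨆ n, |l n|) (fun w => ∑' n, l n * f n w) ∧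
        (⨆ n, |l n|) ≤ lipNorm (fun w => ∑' n, l n * f n w) ∧
        lipNorm (fun w => ∑' n, l n * f n w) ≤ 2 * ⨆ n, |l n| ∧
        StronglyAttains (fun w => ∑' n, l n * f n w)) := by
  intro f hf
  -- basic quantities
  have hD : ∀ n, 0 < dist (x n) (y n) := fun n => dist_pos.mpr (hxy n)
  have ha0 : ∀ n, 0 ≤ isolRad (x n) := fun n => isolRad_nonneg' _
  have hb0 : ∀ n, 0 ≤ isolRad (y n) := fun n => isolRad_nonneg' _
  have hab : ∀ n, 0 < isolRad (x n) + isolRad (y n) := fun n => (hD n).trans (hR n)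
  have haD : ∀ n, isolRad (x n) ≤ dist (x n) (y n) := fun n => isolRad_le_dist' (hxy n).symm
  have hbD : ∀ n, isolRad (y n) ≤ dist (x n) (y n) := fun n => by
    have := isolRad_le_dist' (hxy n)
    rwa [dist_comm] at this
  have hpair : ∀ {n m : ℕ}, n ≠ m → ∀ {u v : M},
      (u = x n ∨ u = y n) → (v = x m ∨ v = y m) → u ≠ v := by
    intro n m hnm u v hu hv huv
    subst huv
    have hmem : u ∈ ({x n, y n} : Set M) ∩ {x m, y m} :=
      ⟨by rcases hu with h | h <;> simp [h], by rcases hv with h | h <;> simp [h]⟩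
    rw [hdisj n m hnm] at hmem
    exact hmem
  -- values of f n
  have hfx : ∀ n, f n (x n)
      = isolRad (x n) / (isolRad (x n) + isolRad (y n)) * dist (x n) (y n) := by
    intro n; rw [hf n]; simp
  have hfy : ∀ n, f n (y n)
      = -(isolRad (y n) / (isolRad (x n) + isolRad (y n)) * dist (x n) (y n)) := by
    intro n; rw [hf n]; simp [(hxy n).symm]
  have hf0 : ∀ n (w : M), w ≠ x n → w ≠ y n → f n w = 0 := by
    intro n w h1 h2; rw [hf n]; simp [h1, h2]
  have hvA0 : ∀ n, 0 ≤ isolRad (x n) / (isolRad (x n) + isolRad (y n)) * dist (x n) (y n) :=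
    fun n => mul_nonneg (div_nonneg (ha0 n) (hab n).le) dist_nonneg
  have hvB0 : ∀ n, 0 ≤ isolRad (y n) / (isolRad (x n) + isolRad (y n)) * dist (x n) (y n) :=
    fun n => mul_nonneg (div_nonneg (hb0 n) (hab n).le) dist_nonneg
  have hvAa : ∀ n, isolRad (x n) / (isolRad (x n) + isolRad (y n)) * dist (x n) (y n)
      ≤ isolRad (x n) := by
    intro n
    calc isolRad (x n) / (isolRad (x n) + isolRad (y n)) * dist (x n) (y n)
        ≤ isolRad (x n) / (isolRad (x n) + isolRad (y n)) * (isolRad (x n) + isolRad (y n)) :=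
          mul_le_mul_of_nonneg_left (hR n).le (div_nonneg (ha0 n) (hab n).le)
      _ = isolRad (x n) := div_mul_cancel₀ _ (hab n).ne'
  have hvBb : ∀ n, isolRad (y n) / (isolRad (x n) + isolRad (y n)) * dist (x n) (y n)
      ≤ isolRad (y n) := by
    intro n
    calc isolRad (y n) / (isolRad (x n) + isolRad (y n)) * dist (x n) (y n)
        ≤ isolRad (y n) / (isolRad (x n) + isolRad (y n)) * (isolRad (x n) + isolRad (y n)) :=
          mul_le_mul_of_nonneg_left (hR n).le (div_nonneg (hb0 n) (hab n).le)
      _ = isolRad (y n) := div_mul_cancel₀ _ (hab n).ne'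
  have hsum : ∀ n, isolRad (x n) / (isolRad (x n) + isolRad (y n)) * dist (x n) (y n)
      + isolRad (y n) / (isolRad (x n) + isolRad (y n)) * dist (x n) (y n)
      = dist (x n) (y n) := by
    intro n
    have h : isolRad (x n) + isolRad (y n) ≠ 0 := (hab n).ne'
    field_simp
  -- the uniform bound for a single f n
  have fbnd : ∀ n (u v : M), u ≠ v → |f n u - f n v| ≤ dist u v := by
    intro n u v huv
    by_cases hux : u = x n
    · subst hux
      by_cases hvy : v = y n
      · subst hvy
        rw [hfx, hfy, sub_neg_eq_add, hsum n, abs_of_nonneg dist_nonneg]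
      · rw [hfx, hf0 n v (Ne.symm huv) hvy, sub_zero, abs_of_nonneg (hvA0 n)]
        exact (hvAa n).trans (isolRad_le_dist' (Ne.symm huv))
    · by_cases huy : u = y n
      · subst huy
        by_cases hvx : v = x n
        · subst hvx
          rw [abs_sub_comm, dist_comm, hfx, hfy, sub_neg_eq_add, hsum n,
            abs_of_nonneg dist_nonneg]
        · rw [hfy, hf0 n v hvx (Ne.symm huv), sub_zero, abs_neg, abs_of_nonneg (hvB0 n)]
          exact (hvBb n).trans (isolRad_le_dist' (Ne.symm huv))
      · have hu0 : f n u = 0 := hf0 n u hux huy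
        by_cases hvx : v = x n
        · subst hvx
          rw [hu0, hfx, zero_sub, abs_neg, abs_of_nonneg (hvA0 n), dist_comm u (x n)]
          exact (hvAa n).trans (isolRad_le_dist' hux)
        · by_cases hvy : v = y n
          · subst hvy
            rw [hu0, hfy, zero_sub, neg_neg, abs_of_nonneg (hvB0 n), dist_comm u (y n)]
            exact (hvBb n).trans (isolRad_le_dist' huy)
          · rw [hu0, hf0 n v hvx hvy, sub_zero, abs_zero]
            exact dist_nonneg
  constructor
  · -- part 1
    intro n
    refine ⟨hf0 n z (Ne.symm (hz n).1) (Ne.symm (hz n).2), ?_⟩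
    refine lipNorm_eq_of_attain zero_le_one (fun u v h => by rw [one_mul]; exact fbnd n u v h)
      (hxy n) ?_
    rw [hfx, hfy, sub_neg_eq_add, hsum n, one_mul, abs_of_nonneg dist_nonneg]
  · -- part 2
    intro l hl
    set G : M → ℝ := fun w => ∑' (n : ℕ), l n * f n w with hGdef
    have hGx : ∀ n, G (x n) = l n * f n (x n) := by
      intro n
      simp only [hGdef]
      exact tsum_eq_single n (fun m hmn => by
        rw [hf0 m (x n) (hpair (Ne.symm hmn) (Or.inl rfl) (Or.inl rfl))
          (hpair (Ne.symm hmn) (Or.inl rfl) (Or.inr rfl)), mul_zero])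
    have hGy : ∀ n, G (y n) = l n * f n (y n) := by
      intro n
      simp only [hGdef]
      exact tsum_eq_single n (fun m hmn => by
        rw [hf0 m (y n) (hpair (Ne.symm hmn) (Or.inr rfl) (Or.inl rfl))
          (hpair (Ne.symm hmn) (Or.inr rfl) (Or.inr rfl)), mul_zero])
    have hG0 : ∀ w : M, (∀ n, w ≠ x n ∧ w ≠ y n) → G w = 0 := by
      intro w hw
      simp only [hGdef]
      calc (∑' m, l m * f m w) = ∑' _ : ℕ, (0 : ℝ) :=
            tsum_congr (fun m => by rw [hf0 m w (hw m).1 (hw m).2, mul_zero])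
        _ = 0 := tsum_zero
    -- the sup of |l n|
    obtain ⟨n₀, hn₀⟩ := exists_max_abs' hl
    have hbdd : BddAbove (Set.range fun n => |l n|) := ⟨|l n₀|, by rintro r ⟨n, rfl⟩; exact hn₀ n⟩
    set s : ℝ := ⨆ n, |l n| with hs
    have hls : ∀ n, |l n| ≤ s := fun n => le_ciSup hbdd n
    have hs0 : 0 ≤ s := (abs_nonneg (l 0)).trans (hls 0)
    have hsmax : s ≤ |l n₀| := ciSup_le hn₀
    -- key pointwise bound
    have hGbound : ∀ β : ℝ, 0 ≤ β → ∀ w w' : M, w ≠ w' →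
        (∀ n, (w = x n ∨ w = y n) → |l n| ≤ β) → |G w| ≤ β * dist w w' := by
      intro β hβ w w' hww hsupp
      by_cases hwx : ∃ n, w = x n
      · obtain ⟨n, rfl⟩ := hwx
        rw [hGx n, hfx n, abs_mul, abs_of_nonneg (hvA0 n)]
        calc |l n| * (isolRad (x n) / (isolRad (x n) + isolRad (y n)) * dist (x n) (y n))
            ≤ β * isolRad (x n) := mul_le_mul (hsupp n (Or.inl rfl)) (hvAa n) (hvA0 n) hβ
          _ ≤ β * dist (x n) w' := mul_le_mul_of_nonneg_left (isolRad_le_dist' (Ne.symm hww)) hβ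
      · by_cases hwy : ∃ n, w = y n
        · obtain ⟨n, rfl⟩ := hwy
          rw [hGy n, hfy n, mul_neg, abs_neg, abs_mul, abs_of_nonneg (hvB0 n)]
          calc |l n| * (isolRad (y n) / (isolRad (x n) + isolRad (y n)) * dist (x n) (y n))
              ≤ β * isolRad (y n) := mul_le_mul (hsupp n (Or.inr rfl)) (hvBb n) (hvB0 n) hβ
            _ ≤ β * dist (y n) w' := mul_le_mul_of_nonneg_left (isolRad_le_dist' (Ne.symm hww)) hβ
        · push_neg at hwx hwy
          rw [hG0 w (fun n => ⟨hwx n, hwy n⟩), abs_zero]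
          exact mul_nonneg hβ dist_nonneg
    have hGs : ∀ w w' : M, w ≠ w' → |G w| ≤ s * dist w w' :=
      fun w w' h => hGbound s hs0 w w' h (fun n _ => hls n)
    have hGdiff : ∀ w w' : M, w ≠ w' → |G w - G w'| ≤ 2 * s * dist w w' := by
      intro w w' h
      calc |G w - G w'| ≤ |G w| + |G w'| := abs_sub _ _
        _ ≤ s * dist w w' + s * dist w' w := add_le_add (hGs w w' h) (hGs w' w (Ne.symm h))
        _ = 2 * s * dist w w' := by rw [dist_comm w' w]; ring
    have hlipw : IsLipWith (2 * s) G := by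
      intro u v
      by_cases h : u = v
      · subst h; simp [mul_nonneg, hs0]
      · exact hGdiff u v h
    have hlip : lipNorm G = sSup {r | ∃ u v : M, u ≠ v ∧ r = |G u - G v| / dist u v} := rfl
    have hq_le : ∀ r ∈ {r | ∃ u v : M, u ≠ v ∧ r = |G u - G v| / dist u v}, r ≤ 2 * s := by
      rintro r ⟨u, v, huv, rfl⟩
      rw [div_le_iff₀ (dist_pos.mpr huv)]
      exact hGdiff u v huv
    have hQbdd : BddAbove {r | ∃ u v : M, u ≠ v ∧ r = |G u - G v| / dist u v} := ⟨2 * s, hq_le⟩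
    have hQne : {r | ∃ u v : M, u ≠ v ∧ r = |G u - G v| / dist u v}.Nonempty :=
      ⟨|G (x 0) - G (y 0)| / dist (x 0) (y 0), x 0, y 0, hxy 0, rfl⟩
    have hGpair : ∀ n, G (x n) - G (y n) = l n * dist (x n) (y n) := by
      intro n
      rw [hGx n, hGy n, hfx n, hfy n, mul_neg, sub_neg_eq_add, ← mul_add, hsum n]
    have hlow : s ≤ lipNorm G := by
      rw [hlip, hs]
      refine ciSup_le fun n => le_csSup hQbdd ⟨x n, y n, hxy n, ?_⟩
      rw [hGpair n, abs_mul, abs_of_nonneg dist_nonneg, mul_div_assoc,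
        div_self (hD n).ne', mul_one]
    have hup : lipNorm G ≤ 2 * s := by
      rw [hlip]
      exact Real.sSup_le hq_le (mul_nonneg (by norm_num) hs0)
    have hatt : StronglyAttains G := by
      rcases le_or_gt (lipNorm G) s with hc | hc
      · have hse : lipNorm G = s := le_antisymm hc hlow
        have hsn : s = |l n₀| := le_antisymm hsmax (hls n₀)
        rcases le_or_gt 0 (l n₀) with hsign | hsign
        · refine ⟨x n₀, y n₀, hxy n₀, ?_⟩
          rw [hGpair n₀, hse, hsn, abs_of_nonneg hsign, mul_div_assoc,
            div_self (hD n₀).ne', mul_one]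
        · refine ⟨y n₀, x n₀, (hxy n₀).symm, ?_⟩
          have hval : G (y n₀) - G (x n₀) = -(l n₀) * dist (x n₀) (y n₀) := by
            rw [← neg_sub, hGpair n₀]; ring
          rw [dist_comm (y n₀) (x n₀), hval, hse, hsn, abs_of_neg hsign, mul_div_assoc,
            div_self (hD n₀).ne', mul_one]
      · set t : ℝ := (s + lipNorm G) / 2 with ht
        have hts : s < t := by rw [ht]; linarith
        have htQ : t < lipNorm G := by rw [ht]; linarith
        obtain ⟨N, hN⟩ := Metric.tendsto_atTop.mp hl (t - s) (by linarith)
        have hN' : ∀ n, N ≤ n → |l n| < t - s := fun n hn => by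
          simpa [Real.dist_eq] using hN n hn
        set P : Set M := (x '' Set.Iio N) ∪ (y '' Set.Iio N) with hP
        have hPfin : P.Finite := ((Set.finite_Iio N).image x).union ((Set.finite_Iio N).image y)
        have hmain : ∀ u v : M, u ≠ v → t < |G u - G v| / dist u v → u ∈ P := by
          intro u v huv hq
          by_contra huP
          have hsupp : ∀ n, (u = x n ∨ u = y n) → |l n| ≤ t - s := by
            intro n hn
            rcases lt_or_ge n N with h | h
            · exfalso
              apply huP
              rw [hP]
              rcases hn with h' | h'
              · exact Or.inl ⟨n, h, h'.symm⟩
              · exact Or.inr ⟨n, h, h'.symm⟩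
            · exact (hN' n h).le
          have h1 : |G u| ≤ (t - s) * dist u v := hGbound (t - s) (by linarith) u v huv hsupp
          have h2 : |G v| ≤ s * dist v u := hGs v u (Ne.symm huv)
          rw [dist_comm] at h2
          have h3 : |G u - G v| ≤ t * dist u v := by
            calc |G u - G v| ≤ |G u| + |G v| := abs_sub _ _
              _ ≤ (t - s) * dist u v + s * dist u v := add_le_add h1 h2
              _ = t * dist u v := by ring
          have h4 : |G u - G v| / dist u v ≤ t := by
            rw [div_le_iff₀ (dist_pos.mpr huv)]
            exact h3
          linarith
        have hS'sub : {r | ∃ u v : M, u ≠ v ∧ r = |G u - G v| / dist u v} ∩ {r | t < r}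
            ⊆ (fun p : M × M => |G p.1 - G p.2| / dist p.1 p.2) '' (P ×ˢ P) := by
          rintro r ⟨⟨u, v, huv, rfl⟩, hrt⟩
          refine ⟨(u, v), ⟨hmain u v huv hrt, ?_⟩, rfl⟩
          apply hmain v u (Ne.symm huv)
          rwa [abs_sub_comm, dist_comm]
        have hS'fin : ({r | ∃ u v : M, u ≠ v ∧ r = |G u - G v| / dist u v}
            ∩ {r | t < r}).Finite := ((hPfin.prod hPfin).image _).subset hS'sub
        have hS'ne : ({r | ∃ u v : M, u ≠ v ∧ r = |G u - G v| / dist u v}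
            ∩ {r | t < r}).Nonempty := by
          obtain ⟨r, hrQ, hrt⟩ := exists_lt_of_lt_csSup hQne (hlip ▸ htQ)
          exact ⟨r, hrQ, hrt⟩
        have hr₀ : sSup ({r | ∃ u v : M, u ≠ v ∧ r = |G u - G v| / dist u v} ∩ {r | t < r})
            ∈ {r | ∃ u v : M, u ≠ v ∧ r = |G u - G v| / dist u v} ∩ {r | t < r} :=
          hS'ne.csSup_mem hS'fin
        have htr₀ : t < sSup ({r | ∃ u v : M, u ≠ v ∧ r = |G u - G v| / dist u v}
            ∩ {r | t < r}) := hr₀.2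
        have hQr₀ : sSup {r | ∃ u v : M, u ≠ v ∧ r = |G u - G v| / dist u v}
            = sSup ({r | ∃ u v : M, u ≠ v ∧ r = |G u - G v| / dist u v} ∩ {r | t < r}) := by
          apply le_antisymm
          · refine Real.sSup_le ?_ (by linarith)
            intro r hrQmem
            rcases le_or_gt r t with h | h
            · linarith
            · exact le_csSup hS'fin.bddAbove ⟨hrQmem, h⟩
          · exact le_csSup hQbdd hr₀.1
        obtain ⟨u, v, huv, hrval⟩ := hr₀.1
        have hlipval : lipNorm G = |G u - G v| / dist u v := by
          rw [hlip, hQr₀, hrval]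
        rcases le_or_gt (G v) (G u) with hsign | hsign
        · exact ⟨u, v, huv, by rw [hlipval, abs_of_nonneg (sub_nonneg.mpr hsign)]⟩
        · refine ⟨v, u, Ne.symm huv, ?_⟩
          rw [hlipval, abs_sub_comm, abs_of_nonneg (sub_nonneg.mpr hsign.le), dist_comm v u]
    exact ⟨hlipw, hlow, hup, hatt⟩
end

section
/- Let M be a pointed metric space, y ∈ M, and (x_n) a sequence of distinct points of M, all different from y and from the base point 0, such that d(x_n, x_m) = d(x_n, y) + d(x_m, y) for all n ≠ m, each x_n is isolated, and d(x_n, y) = R(x_n) where R(x) = sup{R ≥ 0 : closedBall(x,R) = {x}} (so d(x_n, z) ≥ d(x_n, y) for all z ≠ x_n). Define f_n ∈ Lip_0(M) by f_n(x_n) = d(x_n, y) and f_n = 0 elsewhere. Then for every (λ_n) ∈ c_0 the function g = Σ λ_n f_n satisfies ‖g‖ = sup_n |λ_n| and g strongly attains its norm (at the pair (x_i, y) where |λ_i| is maximal). In particular (f_n) spans an isometric copy of c_0 inside SNA(M). -/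
open Metric Set Filter Topology ZeroAtInfty

section aux
variable {M : Type*} [MetricSpace M]

lemma bddAbove_quot {K : ℝ} {f : M → ℝ} (h : IsLipWith K f) :
    BddAbove {r : ℝ | ∃ a b : M, a ≠ b ∧ r = |f a - f b| / dist a b} := by
  refine ⟨K, ?_⟩
  rintro r ⟨a, b, hab, rfl⟩
  rw [div_le_iff₀ (dist_pos.2 hab)]
  exact h a b

lemma lipNorm_le {K : ℝ} {f : M → ℝ} (a0 b0 : M) (hab0 : a0 ≠ b0)
    (h : IsLipWith K f) : lipNorm f ≤ K := by
  refine csSup_le ⟨|f a0 - f b0| / dist a0 b0, ⟨a0, b0, hab0, rfl⟩⟩ ?_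
  rintro r ⟨a, b, hab, rfl⟩
  rw [div_le_iff₀ (dist_pos.2 hab)]
  exact h a b

lemma le_lipNorm {K : ℝ} {f : M → ℝ} (h : IsLipWith K f) (a b : M) (hab : a ≠ b) :
    |f a - f b| / dist a b ≤ lipNorm f :=
  le_csSup (bddAbove_quot h) ⟨a, b, hab, rfl⟩

end aux

/-- the "collinear" case: distinct isolated points `xₙ` with
`d(xₙ,xₘ) = d(xₙ,y) + d(xₘ,y)` and `d(xₙ,y) = R(xₙ)` give one-point bump functions that
are 1-equivalent to the `c₀` basis and whose span lies in `SNA(M)`. -/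
theorem stmt12 {M : Type*} [MetricSpace M] [DecidableEq M] (z y : M) (x : ℕ → M)
    (hinj : Function.Injective x) (hxy : ∀ n, x n ≠ y) (hxz : ∀ n, x n ≠ z)
    (hiso : ∀ n, ∃ r > (0 : ℝ), ball (x n) r = {x n})
    (hcol : ∀ n m, n ≠ m → dist (x n) (x m) = dist (x n) y + dist (x m) y)
    (hRx : ∀ n, ∀ w : M, w ≠ x n → dist (x n) y ≤ dist (x n) w) :
    ∀ f : ℕ → M → ℝ,
      (∀ n, f n = fun w => if w = x n then dist (x n) y else 0) →
      (∀ n, f n z = 0 ∧ lipNorm (f n) = 1) ∧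
      (∀ l : ℕ → ℝ, Tendsto l atTop (𝓝 0) →
        IsLipWith (⨆ n, |l n|) (fun w => ∑' n, l n * f n w) ∧
        lipNorm (fun w => ∑' n, l n * f n w) = ⨆ n, |l n| ∧
        StronglyAttains (fun w => ∑' n, l n * f n w)) := by
  intro f hf
  have hdpos : ∀ n, (0 : ℝ) < dist (x n) y := fun n => dist_pos.2 (hxy n)
  have hdne : ∀ n, dist (x n) y ≠ 0 := fun n => (hdpos n).ne'
  -- evaluation of f
  have hfx : ∀ n, f n (x n) = dist (x n) y := fun n => by rw [hf n]; simp
  have hf0 : ∀ n w, w ≠ x n → f n w = 0 := fun n w hw => by rw [hf n]; simp [hw]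
  -- evaluation of the sums
  have hgx : ∀ (l : ℕ → ℝ) (i : ℕ), (∑' n, l n * f n (x i)) = l i * dist (x i) y := by
    intro l i
    rw [tsum_eq_single i]
    · rw [hfx i]
    · intro n hn
      rw [hf0 n (x i) (fun h => hn (hinj h).symm), mul_zero]
  have hg0 : ∀ (l : ℕ → ℝ) (w : M), (∀ n, w ≠ x n) → (∑' n, l n * f n w) = 0 := by
    intro l w hw
    have : ∀ n, l n * f n w = 0 := fun n => by rw [hf0 n w (hw n), mul_zero]
    simp [this]
  constructor
  · -- part 1
    intro n
    constructor
    · exact hf0 n z (Ne.symm (hxz n))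
    · have hlip1 : IsLipWith 1 (f n) := by
        intro a b
        rw [one_mul]
        by_cases ha : a = x n
        · by_cases hb : b = x n
          · simp [ha, hb]
          · rw [ha, hfx n, hf0 n b hb, sub_zero, abs_of_pos (hdpos n)]
            exact (hRx n b hb).trans (le_of_eq (dist_comm (x n) b ▸ ha ▸ rfl))
        · by_cases hb : b = x n
          · rw [hf0 n a ha, hb, hfx n, zero_sub, abs_neg, abs_of_pos (hdpos n)]
            exact (hRx n a ha).trans_eq (dist_comm _ _)
          · rw [hf0 n a ha, hf0 n b hb, sub_zero, abs_zero]
            exact dist_nonneg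
      refine le_antisymm (lipNorm_le (x n) y (hxy n) hlip1) ?_
      have h1 : (1 : ℝ) = |f n (x n) - f n y| / dist (x n) y := by
        rw [hfx n, hf0 n y (Ne.symm (hxy n)), sub_zero, abs_of_pos (hdpos n),
          div_self (hdne n)]
      calc (1 : ℝ) = |f n (x n) - f n y| / dist (x n) y := h1
        _ ≤ lipNorm (f n) := le_lipNorm hlip1 (x n) y (hxy n)
  · -- part 2
    intro l hl
    set L := ⨆ n, |l n| with hL
    have hla : Tendsto (fun n => |l n|) atTop (𝓝 0) := by simpa using hl.abs
    have hbdd : BddAbove (Set.range fun n => |l n|) := hla.bddAbove_range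
    have hleL : ∀ n, |l n| ≤ L := fun n => le_ciSup hbdd n
    have hL0 : 0 ≤ L := le_trans (abs_nonneg (l 0)) (hleL 0)
    -- Lipschitz bound
    have hlip : IsLipWith L (fun w => ∑' n, l n * f n w) := by
      intro a b
      dsimp only
      by_cases ha : ∃ i, a = x i
      · obtain ⟨i, rfl⟩ := ha
        by_cases hb : ∃ j, b = x j
        · obtain ⟨j, rfl⟩ := hb
          by_cases hij : i = j
          · subst hij; simp [mul_nonneg hL0 dist_nonneg]
          · rw [hgx l i, hgx l j, hcol i j hij, mul_add]
            calc |l i * dist (x i) y - l j * dist (x j) y|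
                ≤ |l i * dist (x i) y| + |l j * dist (x j) y| := abs_sub _ _
              _ = |l i| * dist (x i) y + |l j| * dist (x j) y := by
                  rw [abs_mul, abs_mul, abs_of_pos (hdpos i), abs_of_pos (hdpos j)]
              _ ≤ L * dist (x i) y + L * dist (x j) y := by
                  gcongr <;> [exact hleL i; exact hleL j]
        · push_neg at hb
          rw [hgx l i, hg0 l b hb, sub_zero, abs_mul, abs_of_pos (hdpos i)]
          calc |l i| * dist (x i) y ≤ L * dist (x i) y := by gcongr; exact hleL i
            _ ≤ L * dist (x i) b := by gcongr; exact hRx i b (hb i)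
      · push_neg at ha
        by_cases hb : ∃ j, b = x j
        · obtain ⟨j, rfl⟩ := hb
          rw [hgx l j, hg0 l a ha, zero_sub, abs_neg, abs_mul, abs_of_pos (hdpos j)]
          calc |l j| * dist (x j) y ≤ L * dist (x j) y := by gcongr; exact hleL j
            _ ≤ L * dist (x j) a := by gcongr; exact hRx j a (ha j)
            _ = L * dist a (x j) := by rw [dist_comm]
        · push_neg at hb
          rw [hg0 l a ha, hg0 l b hb, sub_zero, abs_zero]
          exact mul_nonneg hL0 dist_nonneg
    have hnorm : lipNorm (fun w => ∑' n, l n * f n w) = L := by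
      refine le_antisymm (lipNorm_le (x 0) y (hxy 0) hlip) ?_
      refine ciSup_le fun n => ?_
      have heq : |l n| = |(∑' m, l m * f m (x n)) - (∑' m, l m * f m y)| / dist (x n) y := by
        rw [hgx l n, hg0 l y (fun m => Ne.symm (hxy m)), sub_zero, abs_mul,
          abs_of_pos (hdpos n), mul_div_assoc, div_self (hdne n), mul_one]
      rw [heq]
      exact le_lipNorm hlip (x n) y (hxy n)
    refine ⟨hlip, hnorm, ?_⟩
    -- strong attainment
    have hattain : ∃ i, |l i| = L := by
      rcases eq_or_lt_of_le hL0 with h0 | h0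
      · exact ⟨0, le_antisymm (hleL 0) (h0 ▸ abs_nonneg (l 0))⟩
      · obtain ⟨N, hN⟩ := eventually_atTop.1 (hla.eventually (gt_mem_nhds (half_pos h0)))
        obtain ⟨i, hiF, hi⟩ := (Finset.range (N + 1)).exists_max_image
          (fun n => |l n|) ⟨0, Finset.mem_range.2 (Nat.succ_pos N)⟩
        refine ⟨i, le_antisymm (hleL i) ?_⟩
        by_contra hcon
        push_neg at hcon
        have hmax : L ≤ max (|l i|) (L / 2) := ciSup_le fun m => by
          by_cases hm : m < N + 1
          · exact le_max_of_le_left (hi m (Finset.mem_range.2 hm))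
          · exact le_max_of_le_right (hN m (by omega)).le
        exact absurd hmax (not_le.2 (max_lt hcon (half_lt_self h0)))
    obtain ⟨i, hi⟩ := hattain
    rcases abs_cases (l i) with ⟨hli, _⟩ | ⟨hli, _⟩
    · refine ⟨x i, y, hxy i, ?_⟩
      dsimp only
      rw [hgx l i, hg0 l y (fun m => Ne.symm (hxy m)), sub_zero,
        mul_div_assoc, div_self (hdne i), mul_one, hnorm, ← hi]
      exact hli.symm
    · refine ⟨y, x i, (hxy i).symm, ?_⟩
      dsimp only
      rw [hgx l i, hg0 l y (fun m => Ne.symm (hxy m)), zero_sub, dist_comm y (x i),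
        neg_div, mul_div_assoc, div_self (hdne i), mul_one, hnorm, ← hi]
      exact hli.symm
end

section
/- Let M be a pointed metric space with R(x) = sup{R ≥ 0 : closedBall(x,R) = {x}}, and let x ∈ M be a point with R(x) > 0 such that R(x) < d(x,y) for every y ≠ x (i.e., the supremum defining R(x) is not attained as a distance). Assume the set of accumulation points of M is finite, say {a_1,…,a_p}, and that M \ ⋃_i B(a_i,r) is uniformly discrete for every r > 0. Then there exist infinitely many y ∈ M with d(x,y) < R(x) + R(y). -/
open Metric Set Filter Topology ZeroAtInfty

lemma zero_mem_isolSet {M : Type*} [MetricSpace M] (y : M) :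
    (0 : ℝ) ∈ {R : ℝ | 0 ≤ R ∧ Metric.closedBall y R = {y}} :=
  ⟨le_refl 0, Metric.closedBall_zero⟩

lemma factL2 {M : Type*} [MetricSpace M] (x y : M) (hxy : x ≠ y) (c : ℝ)
    (h : isolRad y < c) : ∃ z, z ≠ y ∧ dist y z < c := by
  by_contra h'
  push_neg at h'
  have hbdd : BddAbove {R : ℝ | 0 ≤ R ∧ Metric.closedBall y R = {y}} := by
    refine ⟨dist x y, fun R' hR' => ?_⟩
    by_contra hc
    push_neg at hc
    have : x ∈ Metric.closedBall y R' := by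
      rw [Metric.mem_closedBall]; exact hc.le
    rw [hR'.2] at this
    exact hxy this
  have h0 : 0 ≤ isolRad y := le_csSup hbdd (zero_mem_isolSet y)
  set t := (isolRad y + c) / 2 with ht
  have hti : isolRad y < t := by simp only [ht]; linarith
  have htc : t < c := by simp only [ht]; linarith
  have htmem : t ∈ {R : ℝ | 0 ≤ R ∧ Metric.closedBall y R = {y}} := by
    refine ⟨by linarith, ?_⟩
    ext z
    simp only [Metric.mem_closedBall, Set.mem_singleton_iff]
    constructor
    · intro hz
      by_contra hne
      have := h' z hne
      rw [dist_comm] at hz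
      linarith
    · intro hz; subst hz; simp; linarith
  have := le_csSup hbdd htmem
  exact absurd this (not_le.mpr hti)

lemma factA {M : Type*} [MetricSpace M] (x : M) (hRpos : 0 < isolRad x) :
    ∀ ε > (0:ℝ), ∃ y, y ≠ x ∧ dist x y < isolRad x + ε := by
  intro ε hε
  by_contra h
  push_neg at h
  have hbdd : BddAbove {R : ℝ | 0 ≤ R ∧ Metric.closedBall x R = {x}} := by
    by_contra hb
    have := Real.sSup_of_not_bddAbove hb
    rw [isolRad] at hRpos
    rw [this] at hRpos
    exact lt_irrefl 0 hRpos
  have htmem : isolRad x + ε / 2 ∈ {R : ℝ | 0 ≤ R ∧ Metric.closedBall x R = {x}} := by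
    refine ⟨by linarith, ?_⟩
    ext z
    simp only [Metric.mem_closedBall, Set.mem_singleton_iff]
    constructor
    · intro hz
      by_contra hne
      have := h z hne
      rw [dist_comm] at hz
      linarith
    · intro hz; subst hz; simp; linarith
  have h2 : isolRad x + ε / 2 ≤ isolRad x := le_csSup hbdd htmem
  linarith

lemma factL1 {M : Type*} [MetricSpace M] (x : M) (hRpos : 0 < isolRad x)
    (hnotatt : ∀ y : M, y ≠ x → isolRad x < dist x y) :
    ∀ ε > (0:ℝ), {y : M | y ≠ x ∧ dist x y < isolRad x + ε}.Infinite := by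
  intro ε hε
  by_contra hfin
  rw [Set.not_infinite] at hfin
  rcases Set.eq_empty_or_nonempty {y : M | y ≠ x ∧ dist x y < isolRad x + ε} with he | hne
  · obtain ⟨y, hy1, hy2⟩ := factA x hRpos ε hε
    exact absurd (he ▸ (⟨hy1, hy2⟩ : y ∈ {y : M | y ≠ x ∧ dist x y < isolRad x + ε})) (Set.notMem_empty y)
  · have hFne : hfin.toFinset.Nonempty := by
      rwa [Set.Finite.toFinset_nonempty]
    set m := hfin.toFinset.inf' hFne (fun y => dist x y) with hm
    obtain ⟨y₀, hy₀F, hy₀m⟩ := Finset.exists_mem_eq_inf' hFne (fun y => dist x y)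
    rw [Set.Finite.mem_toFinset] at hy₀F
    have hmR : isolRad x < m := by
      rw [hm, hy₀m]; exact hnotatt y₀ hy₀F.1
    obtain ⟨y, hy1, hy2⟩ := factA x hRpos (m - isolRad x) (by linarith)
    have hyT : y ∈ {y : M | y ≠ x ∧ dist x y < isolRad x + ε} := by
      refine ⟨hy1, ?_⟩
      have : m < isolRad x + ε := by rw [hm, hy₀m]; exact hy₀F.2
      linarith
    have : m ≤ dist x y := Finset.inf'_le _ (by rwa [Set.Finite.mem_toFinset])
    linarith


/-- if `R(x) > 0` is not attained as a distance from `x`, the accumulation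
points are `a₁,…,a_p`, and complements of unions of balls around them are uniformly
discrete, then there are infinitely many `y` with `d(x,y) < R(x) + R(y)`. -/
theorem stmt14 {M : Type*} [MetricSpace M] (p : ℕ) (a : Fin p → M) (x : M)
    (hacc : ∀ w : M, (∀ ε > (0 : ℝ), ∃ v : M, v ≠ w ∧ dist v w < ε) ↔ ∃ i, a i = w)
    (hud : ∀ r > (0 : ℝ), UnifDiscreteOn (Set.univ \ ⋃ i, ball (a i) r))
    (hRpos : 0 < isolRad x)
    (hnotatt : ∀ y : M, y ≠ x → isolRad x < dist x y) :
    {y : M | dist x y < isolRad x + isolRad y}.Infinite := by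
  by_contra hS
  rw [Set.not_infinite] at hS
  set R := isolRad x with hRdef
  -- each a i is distinct from x
  have ha_ne : ∀ i, a i ≠ x := by
    intro i hi
    have hx' := (hacc x).mpr ⟨i, hi⟩
    have hne : Set.Nonempty {R : ℝ | 0 ≤ R ∧ Metric.closedBall x R = {x}} :=
      ⟨0, zero_mem_isolSet x⟩
    obtain ⟨t, htD, ht⟩ := exists_lt_of_lt_csSup hne hRpos
    obtain ⟨v, hv1, hv2⟩ := hx' t ht
    have : v ∈ Metric.closedBall x t := by rw [Metric.mem_closedBall]; exact hv2.le
    rw [htD.2] at this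
    exact hv1 this
  have hdist : ∀ i, R < dist x (a i) := fun i => hnotatt _ (ha_ne i)
  obtain ⟨ε₀, hε₀, hfar⟩ : ∃ ε₀ > 0, ∀ i, R + 2 * ε₀ ≤ dist x (a i) := by
    rcases isEmpty_or_nonempty (Fin p) with hp | hp
    · exact ⟨1, one_pos, fun i => isEmptyElim i⟩
    · have hFne : (Finset.univ : Finset (Fin p)).Nonempty := Finset.univ_nonempty
      set m := Finset.univ.inf' hFne (fun i => dist x (a i)) with hm
      have hmR : R < m := by
        rw [hm, Finset.lt_inf'_iff]
        exact fun i _ => hdist i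
      refine ⟨(m - R) / 4, by linarith, fun i => ?_⟩
      have : m ≤ dist x (a i) := Finset.inf'_le _ (Finset.mem_univ i)
      linarith
  obtain ⟨δ, hδ, hsep⟩ := hud (ε₀ / 2) (by linarith)
  set ε := min δ ε₀ / 2 with hεdef
  have hε : 0 < ε := by
    have := lt_min hδ hε₀
    simp only [hεdef]; linarith
  have hεδ : ε ≤ δ / 2 := by
    have := min_le_left δ ε₀
    simp only [hεdef]; linarith
  have hεε₀ : ε ≤ ε₀ / 2 := by
    have := min_le_right δ ε₀
    simp only [hεdef]; linarith
  have hT := factL1 x hRpos hnotatt ε hε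
  obtain ⟨y, ⟨hyx, hylt⟩, hyS⟩ := (hT.diff hS).nonempty
  have hyS' : R + isolRad y ≤ dist x y := not_lt.mp hyS
  have h1 : isolRad y < ε := by linarith
  obtain ⟨z, hzy, hzd⟩ := factL2 x y (Ne.symm hyx) ε h1
  have hy_mem : y ∈ Set.univ \ ⋃ i, ball (a i) (ε₀ / 2) := by
    simp only [Set.mem_diff, Set.mem_univ, true_and, Set.mem_iUnion, Metric.mem_ball,
      not_exists, not_lt]
    intro i
    have h3 := dist_triangle x y (a i)
    have := hfar i
    linarith [dist_comm (a i) y]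
  have hz_mem : z ∈ Set.univ \ ⋃ i, ball (a i) (ε₀ / 2) := by
    simp only [Set.mem_diff, Set.mem_univ, true_and, Set.mem_iUnion, Metric.mem_ball,
      not_exists, not_lt]
    intro i
    have h3 := dist_triangle x y (a i)
    have h4 := dist_triangle y z (a i)
    have h5 := dist_triangle x z (a i)
    have := hfar i
    linarith [dist_comm (a i) z, dist_triangle x y z]
  have := hsep y hy_mem z hz_mem (Ne.symm hzy)
  linarith
end
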